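/- arXiv:1006.2724 — 9 statements merged into one kernel-verified Lean document; each statement's English description precedes it below -/
import Mathlib

section
/- Let u : (0,1] → ℝ be continuously differentiable with u(1) = 0, and set E = 2π ∫₀¹ u'(r)² r dr. Then for every r ∈ (0,1], exp(4π·u(r)²) ≤ r^(−2E). In particular, if E ≤ 1 then exp(4π·u(r)²) ≤ r^(−2) for all r ∈ (0,1]. -/
/-!
Since `u 1 = 0`, `u r = -∫_r^1 u'`, and Cauchy–Schwarz with the weight `s` gives
`u(r)² ≤ (∫_r^1 u'(s)² s ds) (∫_r^1 ds / s) ≤ (E / 2π) · (-log r)`.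
Exponentiating `4π u(r)² ≤ -2E log r` gives the bound.
-/

open Real MeasureTheory Set

theorem sq_integral_le_integral_sq_mul_mul_integral_inv {α : Type*} [MeasurableSpace α]
    {μ : Measure α} {v w : α → ℝ} (hw : ∀ᵐ x ∂μ, 0 < w x) (hv : Integrable v μ)
    (hvw : Integrable (fun x => v x ^ 2 * w x) μ) (hw_inv : Integrable (fun x => (w x)⁻¹) μ) :
    (∫ x, v x ∂μ) ^ 2 ≤ (∫ x, v x ^ 2 * w x ∂μ) * ∫ x, (w x)⁻¹ ∂μ := by
  set A := ∫ x, v x ^ 2 * w x ∂μ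
  set B := ∫ x, v x ∂μ
  set C := ∫ x, (w x)⁻¹ ∂μ
  have hquad : ∀ t : ℝ, 0 ≤ A * (t * t) + 2 * B * t + C := by
    intro t
    have hsplit : ∫ x, (t ^ 2 * (v x ^ 2 * w x) + 2 * t * v x + (w x)⁻¹) ∂μ
        = A * (t * t) + 2 * B * t + C := by
      have hlin : Integrable (fun x => t ^ 2 * (v x ^ 2 * w x) + 2 * t * v x) μ :=
        (hvw.const_mul _).add (hv.const_mul _)
      rw [integral_add hlin hw_inv, integral_add (hvw.const_mul _) (hv.const_mul _),
        integral_const_mul, integral_const_mul]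
      ring
    rw [← hsplit]
    refine integral_nonneg_of_ae ?_
    filter_upwards [hw] with x hx
    have hsq : t ^ 2 * (v x ^ 2 * w x) + 2 * t * v x + (w x)⁻¹
        = (t * v x * w x + 1) ^ 2 / w x := by
      field_simp
      ring
    rw [Pi.zero_apply, hsq]
    positivity
  have hdisc := discrim_le_zero hquad
  rw [discrim] at hdisc
  linarith

theorem sq_sub_le_integral_sq_mul_mul_log {u u' : ℝ → ℝ} {a b : ℝ} (ha : 0 < a) (hab : a ≤ b)
    (hderiv : ∀ x ∈ Icc a b, HasDerivWithinAt u (u' x) (Icc a b) x)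
    (hcont : ContinuousOn u' (Icc a b)) :
    (u b - u a) ^ 2 ≤ (∫ s in Ioc a b, u' s ^ 2 * s) * log (b / a) := by
  have hFTC : ∫ s in Ioc a b, u' s = u b - u a := by
    rw [← intervalIntegral.integral_of_le hab]
    exact intervalIntegral.integral_eq_sub_of_hasDerivAt_of_le hab
      (fun x hx => (hderiv x hx).continuousWithinAt)
      (fun x hx => (hderiv x (Ioo_subset_Icc_self hx)).hasDerivAt (Icc_mem_nhds hx.1 hx.2))
      (hcont.intervalIntegrable_of_Icc hab)
  have hlog : ∫ s in Ioc a b, s⁻¹ = log (b / a) := by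
    rw [← intervalIntegral.integral_of_le hab, integral_inv_of_pos ha (ha.trans_le hab)]
  have hinv : ContinuousOn (fun s : ℝ => s⁻¹) (Icc a b) :=
    continuousOn_inv₀.mono fun s hs => (ha.trans_le hs.1).ne'
  rw [← hFTC, ← hlog]
  exact sq_integral_le_integral_sq_mul_mul_integral_inv
    (ae_restrict_of_forall_mem measurableSet_Ioc fun s hs => ha.trans hs.1)
    (hcont.integrableOn_Icc.mono_set Ioc_subset_Icc_self)
    (((hcont.pow 2).mul continuousOn_id).integrableOn_Icc.mono_set Ioc_subset_Icc_self)
    (hinv.integrableOn_Icc.mono_set Ioc_subset_Icc_self)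

theorem sq_le_integral_sq_mul_mul_neg_log {u u' : ℝ → ℝ}
    (hderiv : ∀ r ∈ Ioc (0:ℝ) 1, HasDerivWithinAt u (u' r) (Ioc (0:ℝ) 1) r)
    (hcont : ContinuousOn u' (Ioc (0:ℝ) 1)) (hu1 : u 1 = 0)
    (hint : IntegrableOn (fun r => u' r ^ 2 * r) (Ioc (0:ℝ) 1)) {r : ℝ} (hr : r ∈ Ioc (0:ℝ) 1) :
    u r ^ 2 ≤ (∫ s in Ioc (0:ℝ) 1, u' s ^ 2 * s) * -log r := by
  have hsub : Icc r 1 ⊆ Ioc 0 1 := fun x hx => ⟨hr.1.trans_le hx.1, hx.2⟩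
  have htail := sq_sub_le_integral_sq_mul_mul_log hr.1 hr.2
    (fun x hx => (hderiv x (hsub hx)).mono hsub) (hcont.mono hsub)
  rw [hu1, zero_sub, neg_sq, one_div, log_inv] at htail
  refine htail.trans (mul_le_mul_of_nonneg_right ?_ (neg_nonneg.2 (log_nonpos hr.1.le hr.2)))
  refine setIntegral_mono_set hint ?_ (Ioc_subset_Ioc_left hr.1.le).eventuallyLE
  filter_upwards [ae_restrict_mem measurableSet_Ioc] with s hs
  exact mul_nonneg (sq_nonneg _) hs.1.le

theorem stmt_1 (u u' : ℝ → ℝ)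
    (hderiv : ∀ r ∈ Set.Ioc (0:ℝ) 1, HasDerivWithinAt u (u' r) (Set.Ioc (0:ℝ) 1) r)
    (hcont : ContinuousOn u' (Set.Ioc (0:ℝ) 1))
    (hu1 : u 1 = 0)
    (hint : MeasureTheory.IntegrableOn (fun r => (u' r) ^ 2 * r) (Set.Ioc (0:ℝ) 1))
    (E : ℝ) (hE : E = 2 * π * ∫ r in Set.Ioc (0:ℝ) 1, (u' r) ^ 2 * r) :
    (∀ r ∈ Set.Ioc (0:ℝ) 1, Real.exp (4 * π * (u r) ^ 2) ≤ r ^ (-(2 * E))) ∧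
    (E ≤ 1 → ∀ r ∈ Set.Ioc (0:ℝ) 1, Real.exp (4 * π * (u r) ^ 2) ≤ r ^ (-2 : ℝ)) := by
  have hbound : ∀ r ∈ Ioc (0:ℝ) 1, exp (4 * π * u r ^ 2) ≤ r ^ (-(2 * E)) := by
    intro r hr
    have hsq := sq_le_integral_sq_mul_mul_neg_log hderiv hcont hu1 hint hr
    rw [rpow_def_of_pos hr.1, exp_le_exp, hE]
    nlinarith [mul_le_mul_of_nonneg_left hsq (by positivity : (0:ℝ) ≤ 4 * π)]
  exact ⟨hbound, fun hE1 r hr =>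
    (hbound r hr).trans (rpow_le_rpow_of_exponent_ge hr.1 hr.2 (by linarith))⟩
end

section
/- Let u : (0,1] → ℝ be continuously differentiable with u(1) = 0 and ∫₀¹ u'(r)² r dr < ∞. Then ‖u‖_{2*} ≤ ‖∇u‖₂, where ‖u‖_{2*} = sup_{r∈(0,1)} |u(r)|·√(2π/log(1/r)) and ‖∇u‖₂² = 2π ∫₀¹ u'(r)² r dr. In particular, the unit ball of the gradient norm in the radial Sobolev space is contained in the unit ball of the 2*-norm. -/
/-!
Write `u r = -∫_r^1 u'` and apply Cauchy–Schwarz to `u' = (u' √s) · (1 / √s)`: the second factor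
has `∫_r^1 ds / s = log (1 / r)`, so `|u r|² ≤ log (1 / r) · ∫_r^1 u'(s)² s ds`, and the tail integral
is at most the full one.
-/

open Real MeasureTheory Set

/-- The dilation-invariant critical `2*`-norm of a radial function on the unit disk:
`‖u‖_{2*} = sup_{r ∈ (0,1)} |u(r)| · √(2π / log(1/r))`, valued in `[0,∞]`. -/
noncomputable def norm2star (u : ℝ → ℝ) : ENNReal :=
  ⨆ r : Set.Ioo (0:ℝ) 1,
    ENNReal.ofReal (|u r| * Real.sqrt (2 * π / Real.log (1 / (r : ℝ))))

open intervalIntegral in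
theorem integral_eq_sub_of_hasDerivWithinAt_Icc {f f' : ℝ → ℝ} {a b : ℝ} (hab : a ≤ b)
    (hderiv : ∀ x ∈ Icc a b, HasDerivWithinAt f (f' x) (Icc a b) x)
    (hcont : ContinuousOn f' (Icc a b)) :
    ∫ x in a..b, f' x = f b - f a :=
  integral_eq_sub_of_hasDeriv_right_of_le hab (fun x hx => (hderiv x hx).continuousWithinAt)
    (fun x hx => (hderiv x (Ioo_subset_Icc_self hx)).mono_of_mem_nhdsWithin
      (Icc_mem_nhdsGT_of_mem (Ioo_subset_Ico_self hx)))
    (hcont.intervalIntegrable_of_Icc hab)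

theorem integral_mul_le_sqrt_integral_sq_mul_sqrt_integral_sq {α : Type*} [MeasurableSpace α]
    {μ : Measure α} {f g : α → ℝ} (hf_nonneg : 0 ≤ᵐ[μ] f) (hg_nonneg : 0 ≤ᵐ[μ] g)
    (hf : MemLp f 2 μ) (hg : MemLp g 2 μ) :
    ∫ a, f a * g a ∂μ ≤ √(∫ a, f a ^ 2 ∂μ) * √(∫ a, g a ^ 2 ∂μ) := by
  have h := integral_mul_le_Lp_mul_Lq_of_nonneg HolderConjugate.two_two hf_nonneg hg_nonneg
    (by simpa using hf) (by simpa using hg)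
  simpa only [sqrt_eq_rpow, one_div, rpow_two] using h

theorem abs_intervalIntegral_le_sqrt_integral_sq_mul_self_mul_sqrt_log {f : ℝ → ℝ} {a b : ℝ}
    (ha : 0 < a) (hab : a ≤ b) (hf : ContinuousOn f (Icc a b)) :
    |∫ x in a..b, f x| ≤ √(∫ x in a..b, f x ^ 2 * x) * √(log (b / a)) := by
  have hsqrt_pos : ∀ x ∈ Ioc a b, 0 < √x := fun x hx => sqrt_pos.2 (ha.trans hx.1)
  have hsqrt : ContinuousOn (fun x => √x) (Icc a b) := continuous_sqrt.continuousOn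
  have memLp_two : ∀ g : ℝ → ℝ, ContinuousOn g (Icc a b) → MemLp g 2 (volume.restrict (Ioc a b)) :=
    fun g hg => (memLp_two_iff_integrable_sq
      ((hg.mono Ioc_subset_Icc_self).aestronglyMeasurable measurableSet_Ioc)).2
      ((hg.pow 2).integrableOn_Icc.mono_set Ioc_subset_Icc_self)
  rw [intervalIntegral.integral_of_le hab, intervalIntegral.integral_of_le hab,
    ← integral_one_div_of_pos ha (ha.trans_le hab), intervalIntegral.integral_of_le hab]
  calc |∫ x in Ioc a b, f x| ≤ ∫ x in Ioc a b, |f x| := abs_integral_le_integral_abs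
    _ = ∫ x in Ioc a b, (|f x| * √x) * (1 / √x) :=
        setIntegral_congr_fun measurableSet_Ioc fun x hx => by
          field_simp [(hsqrt_pos x hx).ne']
    _ ≤ √(∫ x in Ioc a b, (|f x| * √x) ^ 2) * √(∫ x in Ioc a b, (1 / √x) ^ 2) :=
        integral_mul_le_sqrt_integral_sq_mul_sqrt_integral_sq
          (.of_forall fun x => by positivity) (.of_forall fun x => by positivity)
          (memLp_two _ (hf.abs.mul hsqrt))
          (memLp_two _ (continuousOn_const.div hsqrt fun x hx => (sqrt_pos.2 (ha.trans_le hx.1)).ne'))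
    _ = √(∫ x in Ioc a b, f x ^ 2 * x) * √(∫ x in Ioc a b, 1 / x) := by
        congr 2 <;> refine setIntegral_congr_fun measurableSet_Ioc fun x hx => ?_ <;>
          simp only [mul_pow, div_pow, sq_abs, one_pow, sq_sqrt (ha.trans hx.1).le]

theorem abs_sub_le_sqrt_integral_sq_deriv_mul_self_mul_sqrt_log {u u' : ℝ → ℝ} {a b : ℝ}
    (ha : 0 < a) (hab : a ≤ b)
    (hderiv : ∀ x ∈ Icc a b, HasDerivWithinAt u (u' x) (Icc a b) x)
    (hcont : ContinuousOn u' (Icc a b)) :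
    |u b - u a| ≤ √(∫ x in a..b, u' x ^ 2 * x) * √(log (b / a)) := by
  rw [← integral_eq_sub_of_hasDerivWithinAt_Icc hab hderiv hcont]
  exact abs_intervalIntegral_le_sqrt_integral_sq_mul_self_mul_sqrt_log ha hab hcont

theorem stmt_2 (u u' : ℝ → ℝ)
    (hderiv : ∀ r ∈ Set.Ioc (0:ℝ) 1, HasDerivWithinAt u (u' r) (Set.Ioc (0:ℝ) 1) r)
    (hcont : ContinuousOn u' (Set.Ioc (0:ℝ) 1))
    (hu1 : u 1 = 0)
    (hint : MeasureTheory.IntegrableOn (fun r => (u' r) ^ 2 * r) (Set.Ioc (0:ℝ) 1)) :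
    norm2star u ≤
      ENNReal.ofReal (Real.sqrt (2 * π * ∫ r in Set.Ioc (0:ℝ) 1, (u' r) ^ 2 * r)) := by
  refine iSup_le fun ⟨r, hr0, hr1⟩ => ENNReal.ofReal_le_ofReal ?_
  have hsub : Icc r 1 ⊆ Ioc 0 1 := fun x hx => ⟨hr0.trans_le hx.1, hx.2⟩
  have hlog : 0 < log (1 / r) := log_pos (one_lt_one_div hr0 hr1)
  have hu : |u r| ≤ √(∫ x in r..1, u' x ^ 2 * x) * √(log (1 / r)) := by
    simpa [hu1] using abs_sub_le_sqrt_integral_sq_deriv_mul_self_mul_sqrt_log hr0 hr1.le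
      (fun x hx => (hderiv x (hsub hx)).mono hsub) (hcont.mono hsub)
  have htail : ∫ x in r..1, u' x ^ 2 * x ≤ ∫ x in Ioc 0 1, u' x ^ 2 * x := by
    rw [intervalIntegral.integral_of_le hr1.le]
    exact setIntegral_mono_set hint
      ((ae_restrict_mem measurableSet_Ioc).mono fun x hx => mul_nonneg (sq_nonneg _) hx.1.le)
      (Ioc_subset_Ioc_left hr0.le).eventuallyLE
  calc |u r| * √(2 * π / log (1 / r))
      ≤ √(∫ x in r..1, u' x ^ 2 * x) * √(log (1 / r)) * √(2 * π / log (1 / r)) := by gcongr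
    _ = √(2 * π * ∫ x in r..1, u' x ^ 2 * x) := by
        rw [mul_assoc, ← sqrt_mul hlog.le, mul_div_cancel₀ _ hlog.ne', ← sqrt_mul', mul_comm]
        positivity
    _ ≤ √(2 * π * ∫ x in Ioc 0 1, u' x ^ 2 * x) := by gcongr
end

section
/- Let u, u₁, u₂, … : (0,1) → ℝ be measurable radial functions with ‖u‖_{2*} < 1 and ‖uₖ − u‖_{2*} → 0 as k → ∞ (where ‖v‖_{2*} = sup_{r∈(0,1)} |v(r)|·√(2π/log(1/r))). Then ∫_𝔻 exp(4π·uₖ²) dx → ∫_𝔻 exp(4π·u²) dx, i.e. 2π ∫₀¹ exp(4π·uₖ(r)²) r dr → 2π ∫₀¹ exp(4π·u(r)²) r dr. In other words, the Trudinger–Moser functional u ↦ ∫_𝔻 e^{4πu²} dx is continuous in the 2*-norm on the set {u radial : ‖u‖_{2*} < 1}. -/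
/-!
A bound `‖w‖_{2*} ≤ C` says `4π w(r)² ≤ 2C² log(1/r)`, i.e. `e^{4π w(r)²} r ≤ r^{1 - 2C²}`, and this
majorant is integrable on `(0,1)` exactly when `C < 1`. By the triangle inequality the `vₖ` eventually
satisfy such a bound with one `C < 1`, and convergence in the `2*`-norm forces pointwise convergence on
`(0,1)`, so dominated convergence applies.
-/

open Real MeasureTheory Set Filter Topology

noncomputable def norm2starWeight (r : ℝ) : ℝ :=
  Real.sqrt (2 * π / Real.log (1 / r))

lemma norm2starWeight_pos {r : ℝ} (hr : r ∈ Ioo (0 : ℝ) 1) : 0 < norm2starWeight r :=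
  Real.sqrt_pos.mpr (div_pos (by positivity) (Real.log_pos (one_lt_one_div hr.1 hr.2)))

lemma ofReal_le_norm2star (w : ℝ → ℝ) {r : ℝ} (hr : r ∈ Ioo (0 : ℝ) 1) :
    ENNReal.ofReal (|w r| * norm2starWeight r) ≤ norm2star w :=
  le_iSup (fun r : Ioo (0 : ℝ) 1 =>
    ENNReal.ofReal (|w r| * Real.sqrt (2 * π / Real.log (1 / (r : ℝ))))) ⟨r, hr⟩

lemma abs_mul_norm2starWeight_le {w : ℝ → ℝ} {C : ℝ} (hC : 0 ≤ C)
    (hw : norm2star w ≤ ENNReal.ofReal C) {r : ℝ} (hr : r ∈ Ioo (0 : ℝ) 1) :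
    |w r| * norm2starWeight r ≤ C :=
  (ENNReal.ofReal_le_ofReal_iff hC).mp ((ofReal_le_norm2star w hr).trans hw)

lemma norm2star_add_le (f g : ℝ → ℝ) :
    norm2star (fun r => f r + g r) ≤ norm2star f + norm2star g := by
  refine iSup_le fun r => ?_
  calc ENNReal.ofReal (|f r + g r| * norm2starWeight r)
      ≤ ENNReal.ofReal (|f r| * norm2starWeight r + |g r| * norm2starWeight r) := by
        rw [← add_mul]
        gcongr
        · exact (norm2starWeight_pos r.2).le
        · exact abs_add_le _ _
    _ ≤ ENNReal.ofReal (|f r| * norm2starWeight r) + ENNReal.ofReal (|g r| * norm2starWeight r) :=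
        ENNReal.ofReal_add_le
    _ ≤ norm2star f + norm2star g := add_le_add (ofReal_le_norm2star f r.2) (ofReal_le_norm2star g r.2)

lemma tendsto_apply_of_tendsto_norm2star_sub {v : ℕ → ℝ → ℝ} {u : ℝ → ℝ}
    (hconv : Tendsto (fun k => norm2star (fun r => v k r - u r)) atTop (𝓝 0))
    {r : ℝ} (hr : r ∈ Ioo (0 : ℝ) 1) :
    Tendsto (fun k => v k r) atTop (𝓝 (u r)) := by
  have hc := norm2starWeight_pos hr
  have hbound : ∀ᶠ k in atTop,
      |v k r - u r| ≤ (norm2star (fun r => v k r - u r)).toReal / norm2starWeight r := by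
    filter_upwards [hconv.eventually (gt_mem_nhds ENNReal.zero_lt_top)] with k hk
    rw [le_div_iff₀ hc, ← ENNReal.ofReal_le_iff_le_toReal hk.ne]
    exact ofReal_le_norm2star (fun r => v k r - u r) hr
  have hlim : Tendsto (fun k => (norm2star (fun r => v k r - u r)).toReal / norm2starWeight r)
      atTop (𝓝 0) := by
    simpa using ((ENNReal.tendsto_toReal ENNReal.zero_ne_top).comp hconv).div_const _
  rw [tendsto_iff_norm_sub_tendsto_zero]
  exact squeeze_zero' (Eventually.of_forall fun _ => norm_nonneg _) hbound hlim

lemma exp_mul_le_rpow_of_abs_mul_le {C r w : ℝ} (hr : r ∈ Ioo (0 : ℝ) 1)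
    (hw : |w| * norm2starWeight r ≤ C) :
    Real.exp (4 * π * w ^ 2) * r ≤ r ^ (1 - 2 * C ^ 2) := by
  have hL : 0 < Real.log (1 / r) := Real.log_pos (one_lt_one_div hr.1 hr.2)
  have hsq : w ^ 2 * (2 * π / Real.log (1 / r)) ≤ C ^ 2 := by
    calc w ^ 2 * (2 * π / Real.log (1 / r)) = (|w| * norm2starWeight r) ^ 2 := by
          rw [mul_pow, sq_abs, norm2starWeight, Real.sq_sqrt (by positivity)]
      _ ≤ C ^ 2 := pow_le_pow_left₀ (by positivity [norm2starWeight_pos hr]) hw 2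
  have hexp : 4 * π * w ^ 2 ≤ -(2 * C ^ 2) * Real.log r := by
    rw [one_div, Real.log_inv] at hL hsq
    rw [mul_div_assoc', div_le_iff₀ hL] at hsq
    nlinarith
  calc Real.exp (4 * π * w ^ 2) * r ≤ Real.exp (-(2 * C ^ 2) * Real.log r) * r := by
        gcongr
        exact hr.1.le
    _ = r ^ (1 - 2 * C ^ 2) := by
        rw [mul_comm _ (Real.log r), ← Real.rpow_def_of_pos hr.1, sub_eq_neg_add,
          Real.rpow_add hr.1, Real.rpow_one]

lemma exp_mul_le_rpow_of_norm2star_le {w : ℝ → ℝ} {C : ℝ} (hC : 0 ≤ C)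
    (hw : norm2star w ≤ ENNReal.ofReal C) {r : ℝ} (hr : r ∈ Ioo (0 : ℝ) 1) :
    Real.exp (4 * π * w r ^ 2) * r ≤ r ^ (1 - 2 * C ^ 2) :=
  exp_mul_le_rpow_of_abs_mul_le hr (abs_mul_norm2starWeight_le hC hw hr)

theorem stmt_3_general (u : ℝ → ℝ) (v : ℕ → ℝ → ℝ)
    (hv : ∀ k, Measurable (v k))
    (hnorm : norm2star u < 1)
    (hconv : Tendsto (fun k => norm2star (fun r => v k r - u r)) atTop (𝓝 0)) :
    Tendsto
      (fun k => 2 * π * ∫ r in Set.Ioo (0:ℝ) 1, Real.exp (4 * π * (v k r) ^ 2) * r)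
      atTop
      (𝓝 (2 * π * ∫ r in Set.Ioo (0:ℝ) 1, Real.exp (4 * π * (u r) ^ 2) * r)) := by
  obtain ⟨q, hq, hq1⟩ := exists_between hnorm
  have hC : q.toReal < 1 := ENNReal.toReal_lt_of_lt_ofReal (by rwa [ENNReal.ofReal_one])
  have hbounded : ∀ᶠ k in atTop, norm2star (v k) ≤ ENNReal.ofReal q.toReal := by
    have hsum := (hconv.const_add (norm2star u)).eventually (gt_mem_nhds (by rwa [add_zero]))
    filter_upwards [hsum] with k hk
    rw [ENNReal.ofReal_toReal hq1.ne_top]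
    refine le_trans ?_ hk.le
    simpa using norm2star_add_le u (fun r => v k r - u r)
  refine (tendsto_integral_filter_of_dominated_convergence (fun r => r ^ (1 - 2 * q.toReal ^ 2))
    (Eventually.of_forall fun k => by fun_prop) ?_ ?_ ?_).const_mul _
  · filter_upwards [hbounded] with k hk
    refine (ae_restrict_iff' measurableSet_Ioo).mpr (ae_of_all _ fun r hr => ?_)
    rw [Real.norm_of_nonneg (by positivity [hr.1])]
    exact exp_mul_le_rpow_of_norm2star_le ENNReal.toReal_nonneg hk hr
  · exact (intervalIntegral.integrableOn_Ioo_rpow_iff one_pos).mpr (by nlinarith [ENNReal.toReal_nonneg (a := q)])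
  · refine (ae_restrict_iff' measurableSet_Ioo).mpr (ae_of_all _ fun r hr => ?_)
    have hvr := tendsto_apply_of_tendsto_norm2star_sub hconv hr
    exact ((Real.continuous_exp.tendsto _).comp ((hvr.pow 2).const_mul _)).mul_const r

theorem stmt_3 (u : ℝ → ℝ) (v : ℕ → ℝ → ℝ)
    (hu : Measurable u) (hv : ∀ k, Measurable (v k))
    (hnorm : norm2star u < 1)
    (hconv : Tendsto (fun k => norm2star (fun r => v k r - u r)) atTop (𝓝 0)) :
    Tendsto
      (fun k => 2 * π * ∫ r in Set.Ioo (0:ℝ) 1, Real.exp (4 * π * (v k r) ^ 2) * r)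
      atTop
      (𝓝 (2 * π * ∫ r in Set.Ioo (0:ℝ) 1, Real.exp (4 * π * (u r) ^ 2) * r)) :=
  stmt_3_general u v hv hnorm hconv
end

section
/- Let u, v : (0,1) → ℝ be continuous functions whose supports are compact subsets of the open interval (0,1). Then there exists K such that for all natural numbers k ≥ K, ‖u + h_{1/k}v‖_{2*} = max(‖u‖_{2*}, ‖v‖_{2*}), where (h_{1/k}v)(r) = √k · v(r^{1/k}) and ‖w‖_{2*} = sup_{r∈(0,1)} |w(r)|·√(2π/log(1/r)). -/
open Real MeasureTheory Set

/-!
Since `log (1 / r ^ (1/k)) = log (1 / r) / k`, the weight `√(2π / log (1/r))` absorbs the factor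
`√k`, so the dilation `r ↦ r ^ (1/k)` of `(0,1)` onto itself shows that `h_{1/k}` preserves the
`2*`-norm. If `v` vanishes above `d < 1`, then `h_{1/k} v` vanishes above `d ^ k`, which for large
`k` lies below the support of `u`; for functions with disjoint supports the weighted supremum of
the sum is the maximum of the two suprema.
-/

open Filter Function

lemma exists_Icc_subset_Ioo_of_isCompact {a b : ℝ} {K : Set ℝ} (hab : a < b) (hK : IsCompact K)
    (hKab : K ⊆ Ioo a b) : ∃ c ∈ Ioo a b, ∃ d ∈ Ioo a b, K ⊆ Icc c d := by
  rcases K.eq_empty_or_nonempty with rfl | hne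
  · obtain ⟨c, hc⟩ := nonempty_Ioo.2 hab
    exact ⟨c, hc, c, hc, empty_subset _⟩
  · exact ⟨sInf K, hKab (hK.sInf_mem hne), sSup K, hKab (hK.sSup_mem hne),
      fun x hx => ⟨csInf_le hK.bddBelow hx, le_csSup hK.bddAbove hx⟩⟩

lemma sqrt_two_pi_div_log_one_div_rpow_inv {x t : ℝ} (hx : 0 < x) (ht : 0 < t) :
    √(2 * π / log (1 / x ^ t⁻¹)) = √t * √(2 * π / log (1 / x)) := by
  rw [← sqrt_mul ht.le, one_div, ← inv_rpow hx.le, log_rpow (inv_pos.2 hx), ← one_div]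
  field_simp

lemma norm2star_sqrt_mul_comp_rpow_inv (v : ℝ → ℝ) {t : ℝ} (ht : 0 < t) :
    norm2star (fun r => √t * v (r ^ t⁻¹)) = norm2star v := by
  let φ : Ioo (0:ℝ) 1 → Ioo (0:ℝ) 1 := fun r =>
    ⟨r ^ t⁻¹, rpow_pos_of_pos r.2.1 _, rpow_lt_one r.2.1.le r.2.2 (inv_pos.2 ht)⟩
  have hφ : Function.Surjective φ := fun ρ =>
    ⟨⟨ρ ^ t, rpow_pos_of_pos ρ.2.1 _, rpow_lt_one ρ.2.1.le ρ.2.2 ht⟩,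
      Subtype.ext (rpow_rpow_inv ρ.2.1.le ht.ne')⟩
  unfold norm2star
  conv_rhs => rw [← hφ.iSup_comp]
  refine iSup_congr fun r => ?_
  change _ = ENNReal.ofReal (|v (r ^ t⁻¹)| * √(2 * π / log (1 / (r : ℝ) ^ t⁻¹)))
  rw [sqrt_two_pi_div_log_one_div_rpow_inv r.2.1 ht, abs_mul, abs_of_nonneg (sqrt_nonneg t)]
  congr 1
  ring

lemma norm2star_add_of_forall_eq_zero_or {u w : ℝ → ℝ}
    (h : ∀ r ∈ Ioo (0:ℝ) 1, u r = 0 ∨ w r = 0) :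
    norm2star (fun r => u r + w r) = max (norm2star u) (norm2star w) := by
  unfold norm2star
  rw [← iSup_sup_eq]
  refine iSup_congr fun ⟨r, hr⟩ => ?_
  have habs : |u r + w r| = max |u r| |w r| := by
    rcases h r hr with h0 | h0 <;> simp [h0]
  rw [habs, max_mul_of_nonneg _ _ (sqrt_nonneg _), ENNReal.ofReal_max]

lemma eq_zero_or_comp_rpow_inv_eq_zero {u v : ℝ → ℝ} {c d t r : ℝ} (hd : 0 ≤ d)
    (ht : 0 < t) (hdc : d ^ t < c) (hu : support u ⊆ Ici c) (hv : support v ⊆ Iic d)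
    (hr : 0 ≤ r) :
    u r = 0 ∨ v (r ^ t⁻¹) = 0 := by
  by_contra! h
  have hrd : r ≤ d ^ t := (rpow_inv_le_iff_of_pos hr hd ht).1 (hv h.2)
  exact absurd (hu h.1) (not_le.2 (hrd.trans_lt hdc))

theorem stmt_5_general (u v : ℝ → ℝ)
    (hus : HasCompactSupport u) (hvs : HasCompactSupport v)
    (husupp : tsupport u ⊆ Set.Ioo (0:ℝ) 1) (hvsupp : tsupport v ⊆ Set.Ioo (0:ℝ) 1) :
    ∃ K : ℕ, ∀ k : ℕ, K ≤ k →
      norm2star (fun r => u r + Real.sqrt k * v (r ^ ((k : ℝ)⁻¹))) =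
        max (norm2star u) (norm2star v) := by
  obtain ⟨c, hc, _, _, huc⟩ := exists_Icc_subset_Ioo_of_isCompact one_pos hus husupp
  obtain ⟨_, _, d, hd, hvd⟩ := exists_Icc_subset_Ioo_of_isCompact one_pos hvs hvsupp
  have hu : support u ⊆ Ici c := (subset_tsupport u).trans (huc.trans Icc_subset_Ici_self)
  have hv : support v ⊆ Iic d := (subset_tsupport v).trans (hvd.trans Icc_subset_Iic_self)
  have hdc : ∀ᶠ k : ℕ in atTop, d ^ k < c :=
    (tendsto_pow_atTop_nhds_zero_of_lt_one hd.1.le hd.2).eventually (gt_mem_nhds hc.1)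
  obtain ⟨K, hK⟩ := eventually_atTop.1 (hdc.and (eventually_ge_atTop 1))
  refine ⟨K, fun k hKk => ?_⟩
  obtain ⟨hdck, hk1⟩ := hK k hKk
  have hk : (0:ℝ) < k := by exact_mod_cast hk1
  rw [← rpow_natCast] at hdck
  rw [norm2star_add_of_forall_eq_zero_or fun r hr => ?_, norm2star_sqrt_mul_comp_rpow_inv v hk]
  exact (eq_zero_or_comp_rpow_inv_eq_zero hd.1.le hk hdck hu hv hr.1.le).imp_right
    fun h => by rw [h, mul_zero]

theorem stmt_5 (u v : ℝ → ℝ)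
    (hu : Continuous u) (hv : Continuous v)
    (hus : HasCompactSupport u) (hvs : HasCompactSupport v)
    (husupp : tsupport u ⊆ Set.Ioo (0:ℝ) 1) (hvsupp : tsupport v ⊆ Set.Ioo (0:ℝ) 1) :
    ∃ K : ℕ, ∀ k : ℕ, K ≤ k →
      norm2star (fun r => u r + Real.sqrt k * v (r ^ ((k : ℝ)⁻¹))) =
        max (norm2star u) (norm2star v) :=
  stmt_5_general u v hus hvs husupp hvsupp
end

section
/- Let u, v : (0,1) → ℝ be continuously differentiable functions whose supports are compact subsets of (0,1), and suppose ‖v‖_{2*} > ‖u‖_{2*}, where ‖w‖_{2*} = sup_{r∈(0,1)} |w(r)|·√(2π/log(1/r)). Define uₖ(r) = u(r) + √k · v(r^{1/k}). Then: (i) for every continuously differentiable φ : (0,1) → ℝ with compact support in (0,1), ∫₀¹ uₖ'(r) φ'(r) r dr = ∫₀¹ u'(r) φ'(r) r dr for all sufficiently large k (so uₖ converges weakly to u in the radial Sobolev space); (ii) ‖uₖ‖_{2*} = ‖v‖_{2*} for all sufficiently large k. In particular, since ‖v‖_{2*} ≠ ‖u‖_{2*}, the map w ↦ ‖w‖_{2*}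 is not weakly sequentially continuous at u. -/
/-!
The rescaling `v ↦ √k · v (r ^ (1/k))` leaves the `2*`-norm invariant, since
`log (1 / r ^ (1/k)) = (1/k) · log (1 / r)`, while it pushes the support of `v` into `(0, b ^ k)`
when `v` vanishes on `(b, 1)`. For large `k` this bump therefore lives strictly below the supports
of `u` and of any test function `φ`: it is invisible to the weak pairing with `φ`, and `uₖ` is a sum
of two functions with disjoint supports, whose `2*`-norm is `max ‖u‖_{2*} ‖v‖_{2*} = ‖v‖_{2*}`.
-/

open Real MeasureTheory Set

open Filter

section CompactSubsetOfRay

variable {α : Type*} [LinearOrder α] [TopologicalSpace α] [DenselyOrdered α] {K : Set α} {a : α}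

lemma IsCompact.exists_gt_subset_Ioi [ClosedIicTopology α] [NoMaxOrder α] (hK : IsCompact K)
    (h : K ⊆ Ioi a) : ∃ c, a < c ∧ K ⊆ Ioi c := by
  rcases K.eq_empty_or_nonempty with rfl | hne
  · obtain ⟨c, hc⟩ := exists_gt a
    exact ⟨c, hc, empty_subset _⟩
  · obtain ⟨m, hmK, hm⟩ := hK.exists_isLeast hne
    obtain ⟨c, hac, hcm⟩ := exists_between (h hmK)
    exact ⟨c, hac, fun x hx => hcm.trans_le (hm hx)⟩

lemma IsCompact.exists_lt_subset_Iio [ClosedIciTopology α] [NoMinOrder α] (hK : IsCompact K)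
    (h : K ⊆ Iio a) : ∃ c, c < a ∧ K ⊆ Iio c := by
  rcases K.eq_empty_or_nonempty with rfl | hne
  · obtain ⟨c, hc⟩ := exists_lt a
    exact ⟨c, hc, empty_subset _⟩
  · obtain ⟨m, hmK, hm⟩ := hK.exists_isGreatest hne
    obtain ⟨c, hmc, hca⟩ := exists_between (h hmK)
    exact ⟨c, hca, fun x hx => (hm hx).trans_lt hmc⟩

end CompactSubsetOfRay

noncomputable def radialDilation (t : ℝ) (v : ℝ → ℝ) (r : ℝ) : ℝ :=
  √t * v (r ^ t⁻¹)

lemma abs_radialDilation_mul_sqrt {t r : ℝ} (v : ℝ → ℝ) (ht : 0 < t) (hr : 0 < r) :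
    |radialDilation t v r| * √(2 * π / log (1 / r)) =
      |v (r ^ t⁻¹)| * √(2 * π / log (1 / r ^ t⁻¹)) := by
  have hlog : log (1 / r ^ t⁻¹) = t⁻¹ * log (1 / r) := by
    rw [one_div, one_div, log_inv, log_inv, log_rpow hr]; ring
  rw [hlog, radialDilation, abs_mul, abs_of_nonneg (sqrt_nonneg t), mul_comm t⁻¹, ← div_div,
    div_inv_eq_mul, sqrt_mul' _ ht.le]
  ring

lemma rpow_mem_Ioo {t r : ℝ} (ht : 0 < t) (hr : r ∈ Ioo (0:ℝ) 1) : r ^ t ∈ Ioo (0:ℝ) 1 :=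
  ⟨rpow_pos_of_pos hr.1 _, rpow_lt_one hr.1.le hr.2 ht⟩

lemma norm2star_radialDilation {t : ℝ} (v : ℝ → ℝ) (ht : 0 < t) :
    norm2star (radialDilation t v) = norm2star v := by
  let root : Ioo (0:ℝ) 1 → Ioo (0:ℝ) 1 := fun r => ⟨r ^ t⁻¹, rpow_mem_Ioo (inv_pos.2 ht) r.2⟩
  have hroot : Function.Surjective root := fun s =>
    ⟨⟨s ^ t, rpow_mem_Ioo ht s.2⟩, by
      simp [root, ← rpow_mul s.2.1.le, ht.ne']⟩
  unfold norm2star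
  refine (iSup_congr fun r => ?_).trans
    (hroot.iSup_comp fun s => ENNReal.ofReal (|v s| * √(2 * π / log (1 / (s : ℝ)))))
  rw [abs_radialDilation_mul_sqrt v ht r.2.1]

lemma norm2star_add_of_forall_eq_zero_or_eq_zero {f g : ℝ → ℝ}
    (h : ∀ r ∈ Ioo (0:ℝ) 1, f r = 0 ∨ g r = 0) :
    norm2star (f + g) = norm2star f ⊔ norm2star g := by
  unfold norm2star
  rw [← iSup_sup_eq]
  refine iSup_congr fun r => ?_
  rcases h r r.2 with h0 | h0 <;> simp [h0]

lemma eventually_radialDilation_eq_zero {v : ℝ → ℝ} (hvs : HasCompactSupport v)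
    (hsupp : tsupport v ⊆ Iio 1) {c : ℝ} (hc : 0 < c) :
    ∀ᶠ k : ℕ in atTop, ∀ r, c ≤ r → radialDilation k v r = 0 := by
  obtain ⟨b, hb1, hvb⟩ := hvs.isCompact.exists_lt_subset_Iio hsupp
  have hpow : ∀ᶠ k : ℕ in atTop, max b 0 ^ k < c :=
    (tendsto_pow_atTop_nhds_zero_of_lt_one (le_max_right b 0) (max_lt hb1 one_pos)).eventually
      (gt_mem_nhds hc)
  filter_upwards [hpow, eventually_gt_atTop 0] with k hk hk0 r hcr
  have hroot : max b 0 < r ^ (k : ℝ)⁻¹ := by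
    rw [lt_rpow_inv_iff_of_pos (le_max_right b 0) (hc.trans_le hcr).le (Nat.cast_pos.2 hk0),
      rpow_natCast]
    exact hk.trans_le hcr
  have hout : r ^ (k : ℝ)⁻¹ ∉ tsupport v := fun hmem =>
    (hvb hmem).not_ge ((le_max_left b 0).trans hroot.le)
  rw [radialDilation, image_eq_zero_of_notMem_tsupport hout, mul_zero]

lemma deriv_mul_deriv_eq_of_eqOn {f g φ : ℝ → ℝ} {s : Set ℝ} (hs : IsOpen s) (hfg : EqOn f g s)
    (hφ : tsupport φ ⊆ s) (r : ℝ) : deriv f r * deriv φ r = deriv g r * deriv φ r := by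
  by_cases hr : r ∈ tsupport φ
  · rw [(hfg.eventuallyEq_of_mem (hs.mem_nhds (hφ hr))).deriv_eq]
  · rw [image_eq_zero_of_notMem_tsupport fun h => hr (tsupport_deriv_subset h), mul_zero, mul_zero]

theorem stmt_6_general (u v : ℝ → ℝ)
    (hus : HasCompactSupport u) (hvs : HasCompactSupport v)
    (husupp : tsupport u ⊆ Set.Ioo (0:ℝ) 1) (hvsupp : tsupport v ⊆ Set.Ioo (0:ℝ) 1)
    (hlt : norm2star u < norm2star v)
    (uk : ℕ → ℝ → ℝ)
    (huk : ∀ k : ℕ, ∀ r : ℝ, uk k r = u r + Real.sqrt k * v (r ^ ((k : ℝ)⁻¹))) :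
    (∀ φ : ℝ → ℝ, ContDiff ℝ 1 φ → HasCompactSupport φ →
        tsupport φ ⊆ Set.Ioo (0:ℝ) 1 →
        ∃ K : ℕ, ∀ k : ℕ, K ≤ k →
          ∫ r in Set.Ioo (0:ℝ) 1, deriv (uk k) r * deriv φ r * r =
            ∫ r in Set.Ioo (0:ℝ) 1, deriv u r * deriv φ r * r) ∧
    (∃ K : ℕ, ∀ k : ℕ, K ≤ k → norm2star (uk k) = norm2star v) := by
  have huk_eq : ∀ k : ℕ, uk k = u + radialDilation k v := fun k => funext (huk k)
  have hv_lt_one : tsupport v ⊆ Iio 1 := hvsupp.trans Ioo_subset_Iio_self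
  refine ⟨fun φ _ hφs hφsupp => ?_, ?_⟩
  · obtain ⟨e, he, hφe⟩ :=
      hφs.isCompact.exists_gt_subset_Ioi (hφsupp.trans Ioo_subset_Ioi_self)
    obtain ⟨K, hK⟩ := eventually_atTop.1 (eventually_radialDilation_eq_zero hvs hv_lt_one he)
    refine ⟨K, fun k hk => integral_congr_ae (Eventually.of_forall fun r => ?_)⟩
    have hEqOn : EqOn (uk k) u (Ioi e) := fun x hx => by
      rw [huk_eq, Pi.add_apply, hK k hk x hx.le, add_zero]
    exact congrArg (· * r) (deriv_mul_deriv_eq_of_eqOn isOpen_Ioi hEqOn hφe r)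
  · obtain ⟨c, hc, huc⟩ := hus.isCompact.exists_gt_subset_Ioi (husupp.trans Ioo_subset_Ioi_self)
    obtain ⟨K, hK⟩ := eventually_atTop.1
      ((eventually_radialDilation_eq_zero hvs hv_lt_one hc).and (eventually_gt_atTop 0))
    refine ⟨K, fun k hk => ?_⟩
    have hdisjoint : ∀ r ∈ Ioo (0:ℝ) 1, u r = 0 ∨ radialDilation k v r = 0 := fun r _ =>
      (le_or_gt r c).imp (fun hrc => image_eq_zero_of_notMem_tsupport fun h => (huc h).not_ge hrc)
        (fun hcr => (hK k hk).1 r hcr.le)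
    rw [huk_eq, norm2star_add_of_forall_eq_zero_or_eq_zero hdisjoint,
      norm2star_radialDilation v (Nat.cast_pos.2 (hK k hk).2), sup_eq_right.2 hlt.le]

theorem stmt_6 (u v : ℝ → ℝ)
    (hu : ContDiff ℝ 1 u) (hv : ContDiff ℝ 1 v)
    (hus : HasCompactSupport u) (hvs : HasCompactSupport v)
    (husupp : tsupport u ⊆ Set.Ioo (0:ℝ) 1) (hvsupp : tsupport v ⊆ Set.Ioo (0:ℝ) 1)
    (hlt : norm2star u < norm2star v)
    (uk : ℕ → ℝ → ℝ)
    (huk : ∀ k : ℕ, ∀ r : ℝ, uk k r = u r + Real.sqrt k * v (r ^ ((k : ℝ)⁻¹))) :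
    (∀ φ : ℝ → ℝ, ContDiff ℝ 1 φ → HasCompactSupport φ →
        tsupport φ ⊆ Set.Ioo (0:ℝ) 1 →
        ∃ K : ℕ, ∀ k : ℕ, K ≤ k →
          ∫ r in Set.Ioo (0:ℝ) 1, deriv (uk k) r * deriv φ r * r =
            ∫ r in Set.Ioo (0:ℝ) 1, deriv u r * deriv φ r * r) ∧
    (∃ K : ℕ, ∀ k : ℕ, K ≤ k → norm2star (uk k) = norm2star v) :=
  stmt_6_general u v hus hvs husupp hvsupp hlt uk huk
end

section
/- Let u, w : ℂ → ℝ be smooth functions with compact support contained in the open unit disk 𝔻, and for each natural number k ≥ 2 let ζ_k = 1 − 1/k ∈ 𝔻 and w_k = w ∘ η_{ζ_k}, where η_ζ(z) = (z − ζ)/(1 − conj(ζ)·z). Define J(v) = ∫_𝔻 (exp(4π·v(z)²) − 1)/(1 − |z|²)² dλ(z). Then there exists K such that for all k ≥ K the supports of u and w_k are disjoint and J(u + w_k) = J(u) + J(w). In particular, if w ≠ 0 then J(u + w_k) does not converge to J(u), so J is not weakly continuous at u. -/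
open Real MeasureTheory Set Filter Topology

/-- The Möbius-invariant Trudinger–Moser functional
`J(v) = ∫_𝔻 (e^{4πv²} − 1)/(1 − |z|²)² dλ(z)` on the unit disk, valued in `[0,∞]`. -/
noncomputable def TMfunctional (v : ℂ → ℝ) : ENNReal :=
  ∫⁻ z in {z : ℂ | ‖z‖ < 1},
    ENNReal.ofReal ((Real.exp (4 * π * (v z) ^ 2) - 1) / (1 - ‖z‖ ^ 2) ^ 2)

-- helper lemmas, test 1
lemma normSq_key (ζ : ℝ) (z : ℂ) :
    Complex.normSq (1 - (ζ:ℂ) * z) - Complex.normSq (z - (ζ:ℂ))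
      = (1 - ζ^2) * (1 - Complex.normSq z) := by
  simp only [Complex.normSq_apply, Complex.sub_re, Complex.sub_im, Complex.mul_re,
    Complex.mul_im, Complex.ofReal_re, Complex.ofReal_im, Complex.one_re, Complex.one_im]
  ring

lemma den_ne (ζ : ℝ) (hζ : |ζ| < 1) (z : ℂ) (hz : ‖z‖ < 1) :
    (1 : ℂ) - (ζ:ℂ) * z ≠ 0 := by
  intro h
  have h1 : (1:ℂ) = (ζ:ℂ) * z := sub_eq_zero.mp h
  have h2 := congrArg (‖·‖) h1
  simp only [norm_one, norm_mul, Complex.norm_real, Real.norm_eq_abs] at h2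
  nlinarith [norm_nonneg z, abs_nonneg ζ]

lemma key_id (ζ : ℝ) (hζ : |ζ| < 1) (z : ℂ) (hz : ‖z‖ < 1) :
    1 - ‖(z - (ζ:ℂ)) / (1 - (ζ:ℂ) * z)‖ ^ 2
      = (1 - ζ^2) / Complex.normSq (1 - (ζ:ℂ) * z) * (1 - ‖z‖ ^ 2) := by
  have hn : Complex.normSq (1 - (ζ:ℂ) * z) ≠ 0 :=
    (Complex.normSq_pos.2 (den_ne ζ hζ z hz)).ne'
  rw [Complex.sq_norm, Complex.sq_norm, map_div₀]
  rw [div_mul_eq_mul_div, eq_div_iff hn, sub_mul, div_mul_cancel₀ _ hn]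
  linear_combination normSq_key ζ z

lemma mobius_inv (ζ : ℝ) (h0 : 0 ≤ ζ) (h1 : ζ < 1) (w : ℂ → ℝ) :
    (∫⁻ z in {z : ℂ | ‖z‖ < 1},
      ENNReal.ofReal ((Real.exp (4 * π * (w ((z - (ζ:ℂ)) / (1 - (ζ:ℂ) * z))) ^ 2) - 1)
        / (1 - ‖z‖ ^ 2) ^ 2)) = TMfunctional w := by
  have hζabs : |ζ| < 1 := by rwa [abs_of_nonneg h0]
  have hζsq : 0 < 1 - ζ^2 := by nlinarith
  set D := {z : ℂ | ‖z‖ < 1} with hD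
  have mD : MeasurableSet D := (isOpen_lt continuous_norm continuous_const).measurableSet
  set f : ℂ → ℂ := fun z => (z - (ζ:ℂ)) / (1 - (ζ:ℂ) * z) with hf
  set c : ℂ → ℂ := fun z => ((1:ℂ) - (ζ:ℂ)^2) / ((1:ℂ) - (ζ:ℂ) * z)^2 with hc
  set f' : ℂ → ℂ →L[ℝ] ℂ := fun z =>
    ((ContinuousLinearMap.smulRight (1 : ℂ →L[ℂ] ℂ) (c z)).restrictScalars ℝ) with hf'
  set g : ℂ → ENNReal := fun y =>
    ENNReal.ofReal ((Real.exp (4 * π * (w y) ^ 2) - 1) / (1 - ‖y‖ ^ 2) ^ 2) with hg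
  have hden : ∀ z ∈ D, (1:ℂ) - (ζ:ℂ) * z ≠ 0 := fun z hz => den_ne ζ hζabs z hz
  have hnz : ∀ z ∈ D, 0 < Complex.normSq (1 - (ζ:ℂ) * z) := fun z hz =>
    Complex.normSq_pos.2 (hden z hz)
  have hzsq : ∀ z ∈ D, 0 < 1 - ‖z‖ ^ 2 := by
    intro z hz
    have : ‖z‖ < 1 := hz
    nlinarith [norm_nonneg z]
  have hmaps : ∀ z ∈ D, f z ∈ D := by
    intro z hz
    have h := key_id ζ hζabs z hz
    have ht : 0 < (1 - ζ^2) / Complex.normSq (1 - (ζ:ℂ) * z) :=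
      div_pos hζsq (hnz z hz)
    have h2 : 0 < 1 - ‖f z‖ ^ 2 := by
      rw [hf]; simp only; rw [h]
      exact mul_pos ht (hzsq z hz)
    have h3 := norm_nonneg (f z)
    show ‖f z‖ < 1
    nlinarith
  have himg : f '' D = D := by
    apply Subset.antisymm
    · rintro _ ⟨z, hz, rfl⟩; exact hmaps z hz
    · intro y hy
      have hy' : ‖y‖ < 1 := hy
      have hd2 : (1:ℂ) + (ζ:ℂ) * y ≠ 0 := by
        have := den_ne (-ζ) (by rwa [abs_neg]) y hy'
        push_cast at this
        intro h; apply this; rw [← h]; ring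
      have hkey := normSq_key (-ζ) y
      push_cast at hkey
      have hnum : Complex.normSq (1 + (ζ:ℂ) * y) - Complex.normSq (y + (ζ:ℂ))
          = (1 - ζ^2) * (1 - Complex.normSq y) := by
        have e1 : (1:ℂ) - (-ζ:ℂ) * y = 1 + (ζ:ℂ) * y := by ring
        have e2 : y - (-ζ:ℂ) = y + (ζ:ℂ) := by ring
        rw [e1, e2] at hkey
        convert hkey using 2 <;> ring
      refine ⟨(y + (ζ:ℂ)) / (1 + (ζ:ℂ) * y), ?_, ?_⟩
      · show ‖_‖ < 1
        have hpos : 0 < Complex.normSq (1 + (ζ:ℂ) * y) := Complex.normSq_pos.2 hd2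
        have habs2 : ‖(y + (ζ:ℂ)) / (1 + (ζ:ℂ) * y)‖ ^ 2
            = Complex.normSq (y + (ζ:ℂ)) / Complex.normSq (1 + (ζ:ℂ) * y) := by
          rw [Complex.sq_norm, map_div₀]
        have hylt : Complex.normSq y < 1 := by
          rw [← Complex.sq_norm]; nlinarith [norm_nonneg y]
        have hlt : Complex.normSq (y + (ζ:ℂ)) < Complex.normSq (1 + (ζ:ℂ) * y) := by nlinarith
        have h2 : ‖(y + (ζ:ℂ)) / (1 + (ζ:ℂ) * y)‖ ^ 2 < 1 := by
          rw [habs2, div_lt_one hpos]; exact hlt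
        nlinarith [norm_nonneg ((y + (ζ:ℂ)) / (1 + (ζ:ℂ) * y))]
      · rw [hf]
        simp only
        have hz2 : (1:ℂ) - (ζ:ℂ)^2 ≠ 0 := by
          have : ((1 - ζ^2 : ℝ) : ℂ) ≠ 0 := Complex.ofReal_ne_zero.2 hζsq.ne'
          push_cast at this; convert this using 1
        have hdd : (1:ℂ) - (ζ:ℂ) * ((y + (ζ:ℂ)) / (1 + (ζ:ℂ) * y)) ≠ 0 := by
          have e : (1:ℂ) - (ζ:ℂ) * ((y + (ζ:ℂ)) / (1 + (ζ:ℂ) * y))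
              = ((1:ℂ) - (ζ:ℂ)^2) / (1 + (ζ:ℂ) * y) := by
            field_simp
            ring
          rw [e]
          exact div_ne_zero hz2 hd2
        have e : (1:ℂ) - (ζ:ℂ) * ((y + (ζ:ℂ)) / (1 + (ζ:ℂ) * y))
            = ((1:ℂ) - (ζ:ℂ)^2) / (1 + (ζ:ℂ) * y) := by
          field_simp
          ring
        have e2 : (y + (ζ:ℂ)) / (1 + (ζ:ℂ) * y) - (ζ:ℂ)
            = y * (((1:ℂ) - (ζ:ℂ)^2) / (1 + (ζ:ℂ) * y)) := by
          rw [mul_div_assoc', eq_div_iff hd2, sub_mul, div_mul_cancel₀ _ hd2]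
          ring
        rw [e, e2]
        exact mul_div_cancel_right₀ y (div_ne_zero hz2 hd2)
  have hinj : Set.InjOn f D := by
    intro a ha b hb hab
    have h1 := hden a ha; have h2 := hden b hb
    rw [hf] at hab; simp only at hab
    rw [div_eq_div_iff h1 h2] at hab
    have hz2 : (1:ℂ) - (ζ:ℂ)^2 ≠ 0 := by
      have : ((1 - ζ^2 : ℝ) : ℂ) ≠ 0 := Complex.ofReal_ne_zero.2 hζsq.ne'
      push_cast at this; convert this using 1
    have h3 : ((1:ℂ) - (ζ:ℂ)^2) * (a - b) = 0 := by linear_combination hab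
    rcases mul_eq_zero.mp h3 with h | h
    · exact absurd h hz2
    · exact sub_eq_zero.mp h
  have hder : ∀ z ∈ D, HasFDerivWithinAt f (f' z) D z := by
    intro z hz
    have h1 : HasDerivAt (fun z : ℂ => z - (ζ:ℂ)) 1 z := (hasDerivAt_id z).sub_const _
    have h2 : HasDerivAt (fun z : ℂ => (1:ℂ) - (ζ:ℂ) * z) (-(ζ:ℂ)) z := by
      simpa using (((hasDerivAt_id z).const_mul (ζ:ℂ)).const_sub 1)
    have h3 := h1.div h2 (hden z hz)
    have h4 : (1 * ((1:ℂ) - (ζ:ℂ) * z) - (z - (ζ:ℂ)) * -(ζ:ℂ)) / ((1:ℂ) - (ζ:ℂ) * z) ^ 2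
        = c z := by
      rw [hc]; congr 1; ring
    rw [h4] at h3
    exact (h3.hasFDerivAt.restrictScalars ℝ).hasFDerivWithinAt
  have hdet : ∀ z, (f' z).det = Complex.normSq (c z) := by
    intro z
    have e : ((f' z) : ℂ →ₗ[ℝ] ℂ) = Algebra.lmul ℝ ℂ (c z) := by
      ext x
      simp [hf', mul_comm]
    show LinearMap.det ((f' z) : ℂ →ₗ[ℝ] ℂ) = _
    rw [e, ← Algebra.norm_apply, Algebra.norm_complex_apply]
  calc (∫⁻ z in D,
      ENNReal.ofReal ((Real.exp (4 * π * (w ((z - (ζ:ℂ)) / (1 - (ζ:ℂ) * z))) ^ 2) - 1)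
        / (1 - ‖z‖ ^ 2) ^ 2))
      = ∫⁻ z in D, ENNReal.ofReal |(f' z).det| * g (f z) := by
        apply setLIntegral_congr_fun mD
        intro z hz
        have ht : 0 < (1 - ζ^2) / Complex.normSq (1 - (ζ:ℂ) * z) := div_pos hζsq (hnz z hz)
        set t : ℝ := (1 - ζ^2) / Complex.normSq (1 - (ζ:ℂ) * z) with hT
        have hkey := key_id ζ hζabs z hz
        have hdet2 : |(f' z).det| = t ^ 2 := by
          rw [hdet z, abs_of_nonneg (Complex.normSq_nonneg _), hc]
          simp only
          rw [map_div₀, map_pow]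
          have : Complex.normSq ((1:ℂ) - (ζ:ℂ)^2) = (1 - ζ^2)^2 := by
            have : ((1:ℂ) - (ζ:ℂ)^2) = ((1 - ζ^2 : ℝ) : ℂ) := by push_cast; ring
            rw [this, Complex.normSq_ofReal]; ring
          rw [this, hT]; ring
        rw [hg]
        simp only
        rw [hdet2, ← ENNReal.ofReal_mul (by positivity)]
        congr 1
        rw [← hT] at hkey
        have hd1 : 0 < 1 - ‖z‖ ^ 2 := hzsq z hz
        show (Real.exp (4 * π * (w ((z - (ζ:ℂ)) / (1 - (ζ:ℂ) * z))) ^ 2) - 1)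
            / (1 - ‖z‖ ^ 2) ^ 2
          = t ^ 2 * ((Real.exp (4 * π * (w ((z - (ζ:ℂ)) / (1 - (ζ:ℂ) * z))) ^ 2) - 1)
            / (1 - ‖(z - (ζ:ℂ)) / (1 - (ζ:ℂ) * z)‖ ^ 2) ^ 2)
        rw [hkey]
        field_simp
    _ = ∫⁻ y in f '' D, g y :=
        (lintegral_image_eq_lintegral_abs_det_fderiv_mul volume mD hder hinj g).symm
    _ = TMfunctional w := by rw [himg]; rfl

lemma exists_radius (s : Set ℂ) (hc : IsCompact s) (hs : s ⊆ {z : ℂ | ‖z‖ < 1}) :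
    ∃ r : ℝ, 0 ≤ r ∧ r < 1 ∧ ∀ z ∈ s, ‖z‖ ≤ r := by
  rcases s.eq_empty_or_nonempty with h | h
  · exact ⟨0, le_refl _, one_pos, by simp [h]⟩
  · obtain ⟨z₀, hz₀, hmax⟩ := hc.exists_isMaxOn h continuous_norm.continuousOn
    exact ⟨‖z₀‖, norm_nonneg _, hs hz₀, fun z hz => hmax hz⟩

set_option maxHeartbeats 1000000 in
theorem stmt_13 (u w : ℂ → ℝ)
    (hu : ContDiff ℝ (⊤ : ℕ∞) u) (hw : ContDiff ℝ (⊤ : ℕ∞) w)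
    (hus : HasCompactSupport u) (hws : HasCompactSupport w)
    (husupp : tsupport u ⊆ {z : ℂ | ‖z‖ < 1})
    (hwsupp : tsupport w ⊆ {z : ℂ | ‖z‖ < 1})
    (wk : ℕ → ℂ → ℝ)
    (hwk : ∀ k : ℕ, 2 ≤ k → ∀ z : ℂ,
      wk k z = w ((z - (1 - 1 / (k : ℂ))) / (1 - (starRingEnd ℂ) (1 - 1 / (k : ℂ)) * z))) :
    (∃ K : ℕ, 2 ≤ K ∧ ∀ k : ℕ, K ≤ k →
        Disjoint (Function.support u) (Function.support (wk k)) ∧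
        TMfunctional (u + wk k) = TMfunctional u + TMfunctional w) ∧
    (w ≠ 0 → ¬ Tendsto (fun k => TMfunctional (u + wk k)) atTop (𝓝 (TMfunctional u))) := by
  have mD : MeasurableSet {z : ℂ | ‖z‖ < 1} :=
    (isOpen_lt continuous_norm continuous_const).measurableSet
  have hcu : Continuous u := hu.continuous
  have hcw : Continuous w := hw.continuous
  obtain ⟨ρ, hρ0, hρ1, hρ⟩ := exists_radius _ hus husupp
  obtain ⟨σ, hσ0, hσ1, hσ⟩ := exists_radius _ hws hwsupp
  set ε := (1 - σ^2) * (1 - ρ)^2 with hε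
  have hεpos : 0 < ε := by
    have h1 : 0 < 1 - σ^2 := by nlinarith
    have h2 : (0:ℝ) < (1-ρ)^2 := pow_pos (by linarith) 2
    exact mul_pos h1 h2
  obtain ⟨K₀, hK₀⟩ := exists_nat_gt (2/ε)
  set K := max K₀ 2 with hK
  have hK2 : 2 ≤ K := le_max_right _ _
  -- the measurable integrand associated to u
  have hmeasFu : Measurable (fun z : ℂ =>
      ENNReal.ofReal ((Real.exp (4*π*(u z)^2) - 1)/(1 - ‖z‖^2)^2)) := by
    apply Measurable.ennreal_ofReal
    apply Measurable.div
    · exact (Real.measurable_exp.comp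
        (((hcu.measurable.pow_const 2).const_mul (4*π)))).sub measurable_const
    · exact ((measurable_const.sub (continuous_norm.measurable.pow_const 2)).pow_const 2)
  have hmain : ∀ k : ℕ, K ≤ k →
      Disjoint (Function.support u) (Function.support (wk k)) ∧
      TMfunctional (u + wk k) = TMfunctional u + TMfunctional w := by
    intro k hk
    have hk2 : 2 ≤ k := hK2.trans hk
    have hkpos : (0:ℝ) < k := by positivity
    have hk0 : (k:ℝ) ≠ 0 := hkpos.ne'
    set ζ : ℝ := 1 - 1/(k:ℝ) with hζ
    have hζ0 : 0 ≤ ζ := by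
      rw [hζ]
      have : 1/(k:ℝ) ≤ 1 := by
        rw [div_le_one hkpos]; exact_mod_cast Nat.one_le_of_lt hk2
      linarith
    have hζ1 : ζ < 1 := by
      rw [hζ]
      have : 0 < 1/(k:ℝ) := by positivity
      linarith
    have hζabs : |ζ| < 1 := by rwa [abs_of_nonneg hζ0]
    have hcast : (1:ℂ) - 1/(k:ℂ) = ((ζ:ℝ):ℂ) := by
      rw [hζ]; push_cast; ring
    have hconj : (starRingEnd ℂ) (1 - 1/(k:ℂ)) = 1 - 1/(k:ℂ) := by
      rw [hcast, Complex.conj_ofReal]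
    have hwkf : ∀ z, wk k z = w ((z - (ζ:ℂ)) / (1 - (ζ:ℂ) * z)) := by
      intro z
      rw [hwk k hk2 z, hconj, hcast]
    -- the key smallness estimate
    have hksmall : 1 - ζ^2 < ε := by
      have h2k : 1 - ζ^2 ≤ 2/(k:ℝ) := by
        rw [hζ]
        have e : 1 - (1 - 1/(k:ℝ))^2 = 2/(k:ℝ) - 1/(k:ℝ)^2 := by
          field_simp
          ring
        rw [e]
        have h9 : (0:ℝ) ≤ 1/(k:ℝ)^2 := by positivity
        linarith
      have hkK₀ : (K₀:ℝ) ≤ (k:ℝ) := by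
        exact_mod_cast (le_max_left K₀ 2).trans hk
      have : 2/(k:ℝ) < ε := by
        rw [div_lt_iff₀ hkpos]
        have h2 : 2/ε < (k:ℝ) := lt_of_lt_of_le hK₀ hkK₀
        rw [div_lt_iff₀ hεpos] at h2
        nlinarith
      exact lt_of_le_of_lt h2k this
    -- wk k vanishes on a neighborhood of the support of u
    have hvanish : ∀ z : ℂ, ‖z‖ ≤ ρ → wk k z = 0 := by
      intro z hzρ
      have hzD : ‖z‖ < 1 := lt_of_le_of_lt hzρ hρ1
      have hkey := key_id ζ hζabs z hzD
      have hnz : 0 < Complex.normSq (1 - (ζ:ℂ) * z) := Complex.normSq_pos.2 (den_ne ζ hζabs z hzD)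
      -- lower bound on normSq (1 - ζ z)
      have habs : ‖(ζ:ℂ) * z‖ ≤ ρ := by
        rw [norm_mul, Complex.norm_real, Real.norm_eq_abs, abs_of_nonneg hζ0]
        nlinarith [norm_nonneg z]
      have hlow : 1 - ρ ≤ ‖1 - (ζ:ℂ) * z‖ := by
        have := norm_sub_norm_le (1:ℂ) ((ζ:ℂ) * z)
        simp only [norm_one] at this
        linarith
      have hnorm : (1 - ρ)^2 ≤ Complex.normSq (1 - (ζ:ℂ) * z) := by
        rw [← Complex.sq_norm]
        nlinarith
      have hzsq : 1 - ‖z‖^2 ≤ 1 := by nlinarith [norm_nonneg z]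
      have hbound : 1 - ‖(z - (ζ:ℂ)) / (1 - (ζ:ℂ) * z)‖ ^ 2 < 1 - σ^2 := by
        rw [hkey]
        have h1 : (1 - ζ^2) / Complex.normSq (1 - (ζ:ℂ) * z) * (1 - ‖z‖ ^ 2)
            ≤ (1 - ζ^2) / (1-ρ)^2 := by
          have hq : (1 - ζ^2) / Complex.normSq (1 - (ζ:ℂ) * z) ≤ (1 - ζ^2) / (1-ρ)^2 := by
            apply div_le_div_of_nonneg_left (by nlinarith) (by nlinarith) hnorm
          have hqpos : 0 ≤ (1 - ζ^2) / Complex.normSq (1 - (ζ:ℂ) * z) := by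
            apply div_nonneg (by nlinarith) hnz.le
          have hz2 : 0 < 1 - ‖z‖^2 := by nlinarith [norm_nonneg z]
          nlinarith
        have h2 : (1 - ζ^2) / (1-ρ)^2 < 1 - σ^2 := by
          rw [div_lt_iff₀ (by nlinarith)]
          calc 1 - ζ^2 < ε := hksmall
            _ = (1 - σ^2) * (1-ρ)^2 := hε
        linarith
      have hgt : σ < ‖(z - (ζ:ℂ)) / (1 - (ζ:ℂ) * z)‖ := by
        have h2 : σ^2 < ‖(z - (ζ:ℂ)) / (1 - (ζ:ℂ) * z)‖ ^ 2 := by linarith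
        exact lt_of_pow_lt_pow_left₀ 2 (norm_nonneg _) h2
      have hnotin : ((z - (ζ:ℂ)) / (1 - (ζ:ℂ) * z)) ∉ tsupport w := by
        intro hmem
        exact absurd (hσ _ hmem) (not_le.mpr hgt)
      rw [hwkf z]
      exact image_eq_zero_of_notMem_tsupport hnotin
    have hdisj : Disjoint (Function.support u) (Function.support (wk k)) := by
      rw [Set.disjoint_left]
      intro z hzu hzw
      apply hzw
      exact hvanish z (hρ z (subset_tsupport u hzu))
    refine ⟨hdisj, ?_⟩
    -- splitting of the functional
    have hcase : ∀ z : ℂ, u z = 0 ∨ wk k z = 0 := by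
      intro z
      by_cases h : u z = 0
      · exact Or.inl h
      · exact Or.inr (hvanish z (hρ z (subset_tsupport u h)))
    have hsplit : TMfunctional (u + wk k)
        = TMfunctional u + ∫⁻ z in {z : ℂ | ‖z‖ < 1},
            ENNReal.ofReal ((Real.exp (4 * π * (w ((z - (ζ:ℂ)) / (1 - (ζ:ℂ) * z))) ^ 2) - 1)
              / (1 - ‖z‖ ^ 2) ^ 2) := by
      rw [TMfunctional, TMfunctional]
      rw [← lintegral_add_left hmeasFu]
      apply setLIntegral_congr_fun mD
      intro z hz
      have hA : 0 ≤ Real.exp (4*π*(u z)^2) - 1 := by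
        have := Real.one_le_exp (show (0:ℝ) ≤ 4*π*(u z)^2 by positivity)
        linarith
      have hB : 0 ≤ Real.exp (4*π*(w ((z - (ζ:ℂ)) / (1 - (ζ:ℂ) * z)))^2) - 1 := by
        have := Real.one_le_exp
          (show (0:ℝ) ≤ 4*π*(w ((z - (ζ:ℂ)) / (1 - (ζ:ℂ) * z)))^2 by positivity)
        linarith
      have hnum : Real.exp (4*π*((u + wk k) z)^2) - 1
          = (Real.exp (4*π*(u z)^2) - 1)
            + (Real.exp (4*π*(w ((z - (ζ:ℂ)) / (1 - (ζ:ℂ) * z)))^2) - 1) := by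
        rcases hcase z with h | h
        · rw [Pi.add_apply, h, hwkf z, zero_add]
          simp [Real.exp_zero]
        · rw [Pi.add_apply, h, add_zero, ← hwkf z, h]
          simp [Real.exp_zero]
      beta_reduce
      rw [hnum, add_div, ENNReal.ofReal_add (by positivity) (by positivity)]
    rw [hsplit, mobius_inv ζ hζ0 hζ1 w]
  refine ⟨⟨K, hK2, hmain⟩, ?_⟩
  -- second part
  intro hw0 htend
  -- TMfunctional u is finite
  have huT : TMfunctional u ≠ ⊤ := by
    have hcont : ContinuousOn
        (fun z : ℂ => (Real.exp (4*π*(u z)^2) - 1)/(1 - ‖z‖^2)^2) (tsupport u) := by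
      apply ContinuousOn.div
      · exact ((Real.continuous_exp.comp (continuous_const.mul (hcu.pow 2))).sub
          continuous_const).continuousOn
      · exact ((continuous_const.sub (continuous_norm.pow 2)).pow 2).continuousOn
      · intro z hz
        have hzD : ‖z‖ < 1 := husupp hz
        have : 0 < 1 - ‖z‖^2 := by nlinarith [norm_nonneg z]
        positivity
    obtain ⟨C, hC⟩ := hus.exists_bound_of_continuousOn hcont
    have hle : TMfunctional u ≤ ENNReal.ofReal C * volume (tsupport u) := by
      rw [TMfunctional]
      have hpt : ∀ z : ℂ,
          ENNReal.ofReal ((Real.exp (4*π*(u z)^2) - 1)/(1 - ‖z‖^2)^2)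
          ≤ (tsupport u).indicator (fun _ => ENNReal.ofReal C) z := by
        intro z
        by_cases hz : z ∈ tsupport u
        · rw [Set.indicator_of_mem hz]
          apply ENNReal.ofReal_le_ofReal
          calc (Real.exp (4*π*(u z)^2) - 1)/(1 - ‖z‖^2)^2
              ≤ |(Real.exp (4*π*(u z)^2) - 1)/(1 - ‖z‖^2)^2| := le_abs_self _
            _ ≤ C := hC z hz
        · rw [Set.indicator_of_notMem hz]
          have hz0 : u z = 0 := image_eq_zero_of_notMem_tsupport hz
          rw [hz0]
          simp [Real.exp_zero]
      calc ∫⁻ z in {z : ℂ | ‖z‖ < 1},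
            ENNReal.ofReal ((Real.exp (4*π*(u z)^2) - 1)/(1 - ‖z‖^2)^2)
          ≤ ∫⁻ z in {z : ℂ | ‖z‖ < 1},
            (tsupport u).indicator (fun _ => ENNReal.ofReal C) z := lintegral_mono hpt
        _ ≤ ∫⁻ z, (tsupport u).indicator (fun _ => ENNReal.ofReal C) z :=
            setLIntegral_le_lintegral _ _
        _ = ENNReal.ofReal C * volume (tsupport u) := by
            rw [lintegral_indicator (isClosed_tsupport u).measurableSet, setLIntegral_const]
      -- done
    have hfin : ENNReal.ofReal C * volume (tsupport u) < ⊤ :=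
      ENNReal.mul_lt_top ENNReal.ofReal_lt_top (IsCompact.measure_lt_top hus)
    exact (lt_of_le_of_lt hle hfin).ne
  -- TMfunctional w is positive
  have hJw : 0 < TMfunctional w := by
    obtain ⟨z₀, hz₀⟩ : ∃ z, w z ≠ 0 := by
      by_contra h
      push_neg at h
      exact hw0 (funext h)
    set δ := (w z₀)^2 with hδ
    have hδpos : 0 < δ := by
      have h1 : δ ≠ 0 := pow_ne_zero 2 hz₀
      exact lt_of_le_of_ne (sq_nonneg _) (Ne.symm h1)
    set U := {z : ℂ | δ/2 < (w z)^2} with hU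
    have hUopen : IsOpen U := isOpen_lt continuous_const (hcw.pow 2)
    have hz₀U : z₀ ∈ U := by
      show δ/2 < (w z₀)^2
      rw [← hδ]; linarith
    have hUD : U ⊆ {z : ℂ | ‖z‖ < 1} := by
      intro z hz
      apply hwsupp
      apply subset_tsupport w
      intro h0
      have : (w z)^2 > δ/2 := hz
      rw [h0] at this
      nlinarith
    have hlow : ∀ z ∈ U,
        ENNReal.ofReal (Real.exp (4*π*(δ/2)) - 1)
        ≤ ENNReal.ofReal ((Real.exp (4 * π * (w z) ^ 2) - 1) / (1 - ‖z‖ ^ 2) ^ 2) := by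
      intro z hz
      have hzD : ‖z‖ < 1 := hUD hz
      have h1 : 0 < 1 - ‖z‖^2 := by nlinarith [norm_nonneg z]
      have h2 : (1 - ‖z‖^2)^2 ≤ 1 := by nlinarith [norm_nonneg z]
      have h3 : Real.exp (4*π*(δ/2)) ≤ Real.exp (4*π*(w z)^2) := by
        apply Real.exp_le_exp.2
        have : δ/2 < (w z)^2 := hz
        nlinarith [pi_pos]
      apply ENNReal.ofReal_le_ofReal
      rw [le_div_iff₀ (by positivity)]
      have h4 : 1 ≤ Real.exp (4*π*(δ/2)) :=
        Real.one_le_exp (by positivity)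
      nlinarith
    have hcpos : (0:ENNReal) < ENNReal.ofReal (Real.exp (4*π*(δ/2)) - 1) := by
      rw [ENNReal.ofReal_pos]
      have : 1 < Real.exp (4*π*(δ/2)) := by
        rw [← Real.exp_zero]
        apply Real.exp_lt_exp.2
        positivity
      linarith
    have hUpos : 0 < volume U := hUopen.measure_pos volume ⟨z₀, hz₀U⟩
    calc (0:ENNReal) < ENNReal.ofReal (Real.exp (4*π*(δ/2)) - 1) * volume U :=
          ENNReal.mul_pos hcpos.ne' hUpos.ne'
      _ = ∫⁻ _ in U, ENNReal.ofReal (Real.exp (4*π*(δ/2)) - 1) := (setLIntegral_const _ _).symm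
      _ ≤ ∫⁻ z in U,
            ENNReal.ofReal ((Real.exp (4 * π * (w z) ^ 2) - 1) / (1 - ‖z‖ ^ 2) ^ 2) :=
          setLIntegral_mono' hUopen.measurableSet hlow
      _ ≤ TMfunctional w := lintegral_mono_set hUD
  -- derive contradiction
  have h1 : Tendsto (fun k => TMfunctional (u + wk k)) atTop
      (𝓝 (TMfunctional u + TMfunctional w)) := by
    apply Tendsto.congr' _ tendsto_const_nhds
    filter_upwards [eventually_ge_atTop K] with k hk
    exact ((hmain k hk).2).symm
  have heq : TMfunctional u = TMfunctional u + TMfunctional w := tendsto_nhds_unique htend h1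
  have h0 : (0:ENNReal) = TMfunctional w := by
    have heq' : TMfunctional u + 0 = TMfunctional u + TMfunctional w := by
      rw [add_zero]; exact heq
    exact (ENNReal.add_right_inj huT).mp heq'
  exact absurd h0.symm hJw.ne'
end

section
/- For every smooth function u : ℝ² → ℝ with compact support contained in the open unit disk 𝔻 = {x ∈ ℝ² : |x| < 1}, one has the Hardy inequality with distance to the boundary: ∫_𝔻 u(x)²/(1 − |x|)² dx ≤ 4 ∫_𝔻 ‖∇u(x)‖² dx. -/
open Real MeasureTheory Set intervalIntegral

lemma ptwise (gr g' r : ℝ) (hr : 0 ≤ r) (h1 : 0 < 1 - r) :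
    -((2 * gr * g' * r + gr ^ 2) / (1 - r)) ≤ r * gr ^ 2 / (1 - r) ^ 2 / 2 + 2 * (r * g' ^ 2) := by
  rw [← sub_nonneg]
  have key : r * gr ^ 2 / (1 - r) ^ 2 / 2 + 2 * (r * g' ^ 2) - -((2 * gr * g' * r + gr ^ 2) / (1 - r))
      = (r * (gr + 2 * g' * (1 - r)) ^ 2 + 2 * gr ^ 2 * (1 - r)) / (2 * (1 - r) ^ 2) := by
    field_simp; ring
  rw [key]; positivity

lemma hardy1d_real {g : ℝ → ℝ} (hg : ContDiff ℝ (⊤ : ℕ∞) g) {b : ℝ} (hb0 : 0 < b) (hb1 : b < 1)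
    (hgb : ∀ r, b ≤ r → g r = 0) :
    ∫ r in (0:ℝ)..b, r * g r ^ 2 / (1 - r) ^ 2 ≤ 4 * ∫ r in (0:ℝ)..b, r * (deriv g r) ^ 2 := by
  have hgc : Continuous g := hg.continuous
  have hg'c : Continuous (deriv g) := hg.continuous_deriv (by simp)
  have huIcc : uIcc (0:ℝ) b = Icc 0 b := uIcc_of_le hb0.le
  have hne : ∀ r ∈ uIcc (0:ℝ) b, (1:ℝ) - r ≠ 0 := by
    rw [huIcc]; rintro r ⟨_, hrb⟩; have := lt_of_le_of_lt hrb hb1; linarith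
  -- integrability of the pieces
  have hcont1 : ContinuousOn (fun r => (2 * g r * deriv g r * r + g r ^ 2) / (1 - r)) (uIcc (0:ℝ) b) :=
    ContinuousOn.div (by fun_prop) (by fun_prop) hne
  have hcont2 : ContinuousOn (fun r => r * g r ^ 2 / (1 - r) ^ 2) (uIcc (0:ℝ) b) :=
    ContinuousOn.div (by fun_prop) (by fun_prop) (fun r hr => pow_ne_zero _ (hne r hr))
  have hcont3 : ContinuousOn (fun r => r * (deriv g r) ^ 2) (uIcc (0:ℝ) b) := by fun_prop
  have hint1 := hcont1.intervalIntegrable (μ := volume)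
  have hint2 := hcont2.intervalIntegrable (μ := volume)
  have hint3 := hcont3.intervalIntegrable (μ := volume)
  -- integration by parts identity
  have hibp : (∫ r in (0:ℝ)..b, ((2 * g r * deriv g r * r + g r ^ 2) / (1 - r)
      + r * g r ^ 2 / (1 - r) ^ 2)) = 0 := by
    have hd : ∀ r ∈ uIcc (0:ℝ) b, HasDerivAt (fun r => g r ^ 2 * r * (1 - r)⁻¹)
        ((2 * g r * deriv g r * r + g r ^ 2) / (1 - r) + r * g r ^ 2 / (1 - r) ^ 2) r := by
      intro r hr
      have h1 : HasDerivAt g (deriv g r) r := (hg.differentiable (by simp) r).hasDerivAt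
      have hsq : HasDerivAt (fun r => g r ^ 2) (2 * g r * deriv g r) r := by
        simpa [mul_comm] using h1.fun_pow 2
      have hmul : HasDerivAt (fun r => g r ^ 2 * r) (2 * g r * deriv g r * r + g r ^ 2 * 1) r :=
        hsq.mul (hasDerivAt_id r)
      have hs : HasDerivAt (fun r : ℝ => 1 - r) (-1) r := (hasDerivAt_id r).const_sub 1
      have hinv : HasDerivAt (fun r : ℝ => (1 - r)⁻¹) (-(-1) / (1 - r) ^ 2) r := hs.inv (hne r hr)
      have := hmul.fun_mul hinv
      refine this.congr_deriv ?_
      ring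
    rw [integral_eq_sub_of_hasDerivAt hd ((hint1.add hint2).congr ?heq)]
    · rw [hgb b le_rfl]; ring_nf
    · exact fun _ _ => rfl
  rw [intervalIntegral.integral_add hint1 hint2] at hibp
  -- monotone comparison
  have hmono : (∫ r in (0:ℝ)..b, -((2 * g r * deriv g r * r + g r ^ 2) / (1 - r)))
      ≤ ∫ r in (0:ℝ)..b, (r * g r ^ 2 / (1 - r) ^ 2 / 2 + 2 * (r * (deriv g r) ^ 2)) := by
    apply intervalIntegral.integral_mono_on hb0.le hint1.neg
      ((hint2.div_const 2).add (hint3.const_mul 2))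
    intro r hr
    exact ptwise (g r) (deriv g r) r hr.1 (by rcases hr with ⟨_, h⟩; have := lt_of_le_of_lt h hb1; linarith)
  rw [intervalIntegral.integral_neg, intervalIntegral.integral_add (hint2.div_const 2) (hint3.const_mul 2),
    intervalIntegral.integral_div, intervalIntegral.integral_const_mul] at hmono
  linarith

lemma hardy1d {g : ℝ → ℝ} (hg : ContDiff ℝ (⊤ : ℕ∞) g) {b : ℝ} (hb0 : 0 < b) (hb1 : b < 1)
    (hgb : ∀ r, b ≤ r → g r = 0) :
    ∫⁻ r in Ioi (0:ℝ), ENNReal.ofReal (r * (g r ^ 2 / (1 - r) ^ 2)) ≤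
      4 * ∫⁻ r in Ioi (0:ℝ), ENNReal.ofReal (r * (deriv g r) ^ 2) := by
  have hgc : Continuous g := hg.continuous
  have hg'c : Continuous (deriv g) := hg.continuous_deriv (by simp)
  have hne : ∀ r ∈ Icc (0:ℝ) b, (1:ℝ) - r ≠ 0 := by
    rintro r ⟨_, hrb⟩; have := lt_of_le_of_lt hrb hb1; linarith
  have hcφ : ContinuousOn (fun r => r * (g r ^ 2 / (1 - r) ^ 2)) (Icc (0:ℝ) b) :=
    ContinuousOn.mul (by fun_prop) (ContinuousOn.div (by fun_prop) (by fun_prop)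
      (fun r hr => pow_ne_zero _ (hne r hr)))
  have hintφ : IntegrableOn (fun r => r * (g r ^ 2 / (1 - r) ^ 2)) (Ioo (0:ℝ) b) :=
    (hcφ.integrableOn_compact isCompact_Icc).mono_set Ioo_subset_Icc_self
  have hintψ : IntegrableOn (fun r => r * (deriv g r) ^ 2) (Ioo (0:ℝ) b) :=
    ((continuous_id.mul (hg'c.pow 2)).integrableOn_Icc (a := 0) (b := b)).mono_set Ioo_subset_Icc_self
  -- LHS equals the finite piece
  have hsplit : ∫⁻ r in Ioi (0:ℝ), ENNReal.ofReal (r * (g r ^ 2 / (1 - r) ^ 2)) =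
      ∫⁻ r in Ioo (0:ℝ) b, ENNReal.ofReal (r * (g r ^ 2 / (1 - r) ^ 2)) := by
    rw [← Ioo_union_Ici_eq_Ioi hb0, lintegral_union measurableSet_Ici
      ((Iio_disjoint_Ici le_rfl).mono_left Ioo_subset_Iio_self)]
    have h0 : ∫⁻ r in Ici b, ENNReal.ofReal (r * (g r ^ 2 / (1 - r) ^ 2)) = 0 := by
      have hae : ∀ᵐ r ∂(volume.restrict (Ici b)),
          ENNReal.ofReal (r * (g r ^ 2 / (1 - r) ^ 2)) = 0 := by
        refine (ae_restrict_iff' measurableSet_Ici).2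
          (Filter.Eventually.of_forall fun r hr => ?_)
        rw [hgb r hr]; simp
      rw [lintegral_congr_ae hae, lintegral_zero]
    rw [h0, add_zero]
  have hφpos : 0 ≤ᵐ[volume.restrict (Ioo (0:ℝ) b)] fun r => r * (g r ^ 2 / (1 - r) ^ 2) := by
    refine (ae_restrict_iff' measurableSet_Ioo).2 (Filter.Eventually.of_forall fun r hr => ?_)
    have : (0:ℝ) < r := hr.1
    positivity
  have hψpos : 0 ≤ᵐ[volume.restrict (Ioo (0:ℝ) b)] fun r => r * (deriv g r) ^ 2 := by
    refine (ae_restrict_iff' measurableSet_Ioo).2 (Filter.Eventually.of_forall fun r hr => ?_)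
    have : (0:ℝ) < r := hr.1
    positivity
  have hL : ∫⁻ r in Ioo (0:ℝ) b, ENNReal.ofReal (r * (g r ^ 2 / (1 - r) ^ 2)) =
      ENNReal.ofReal (∫ r in Ioo (0:ℝ) b, r * (g r ^ 2 / (1 - r) ^ 2)) :=
    (ofReal_integral_eq_lintegral_ofReal hintφ hφpos).symm
  have hR : ∫⁻ r in Ioo (0:ℝ) b, ENNReal.ofReal (r * (deriv g r) ^ 2) =
      ENNReal.ofReal (∫ r in Ioo (0:ℝ) b, r * (deriv g r) ^ 2) :=
    (ofReal_integral_eq_lintegral_ofReal hintψ hψpos).symm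
  have hreal : ∫ r in Ioo (0:ℝ) b, r * (g r ^ 2 / (1 - r) ^ 2) ≤
      4 * ∫ r in Ioo (0:ℝ) b, r * (deriv g r) ^ 2 := by
    have h1 : ∫ r in Ioo (0:ℝ) b, r * (g r ^ 2 / (1 - r) ^ 2) =
        ∫ r in (0:ℝ)..b, r * g r ^ 2 / (1 - r) ^ 2 := by
      rw [intervalIntegral.integral_of_le hb0.le, MeasureTheory.integral_Ioc_eq_integral_Ioo]
      simp_rw [mul_div_assoc]
    have h2 : ∫ r in Ioo (0:ℝ) b, r * (deriv g r) ^ 2 =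
        ∫ r in (0:ℝ)..b, r * (deriv g r) ^ 2 := by
      rw [intervalIntegral.integral_of_le hb0.le, MeasureTheory.integral_Ioc_eq_integral_Ioo]
    rw [h1, h2]
    exact hardy1d_real hg hb0 hb1 hgb
  calc ∫⁻ r in Ioi (0:ℝ), ENNReal.ofReal (r * (g r ^ 2 / (1 - r) ^ 2))
      = ENNReal.ofReal (∫ r in Ioo (0:ℝ) b, r * (g r ^ 2 / (1 - r) ^ 2)) := by rw [hsplit, hL]
    _ ≤ ENNReal.ofReal (4 * ∫ r in Ioo (0:ℝ) b, r * (deriv g r) ^ 2) :=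
        ENNReal.ofReal_le_ofReal hreal
    _ = 4 * ENNReal.ofReal (∫ r in Ioo (0:ℝ) b, r * (deriv g r) ^ 2) := by
        rw [ENNReal.ofReal_mul (by norm_num)]; norm_num
    _ = 4 * ∫⁻ r in Ioo (0:ℝ) b, ENNReal.ofReal (r * (deriv g r) ^ 2) := by rw [hR]
    _ ≤ 4 * ∫⁻ r in Ioi (0:ℝ), ENNReal.ofReal (r * (deriv g r) ^ 2) := by
        gcongr
        exact fun r hr => hr.1

lemma cont_of_vanish {v : ℂ → ℝ} (hv : Continuous v) {c : ℝ} (hc : c < 1)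
    (h0 : ∀ z : ℂ, c ≤ ‖z‖ → v z = 0) :
    Continuous fun z : ℂ => v z ^ 2 / (1 - ‖z‖) ^ 2 := by
  rw [continuous_iff_continuousAt]
  intro z
  by_cases hz : (1 - ‖z‖) ^ 2 = 0
  · have h1 : ‖z‖ = 1 := by
      have := pow_eq_zero_iff (n := 2) (by norm_num) |>.1 hz
      linarith [this]
    have hopen : IsOpen {w : ℂ | c < ‖w‖} := isOpen_lt continuous_const continuous_norm
    have hmem : z ∈ {w : ℂ | c < ‖w‖} := by simp only [mem_setOf_eq, h1]; exact hc
    have hev : (fun w : ℂ => v w ^ 2 / (1 - ‖w‖) ^ 2) =ᶠ[nhds z] fun _ => 0 := by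
      filter_upwards [hopen.mem_nhds hmem] with w hw
      rw [h0 w (le_of_lt hw)]; simp
    exact continuousAt_const.congr hev.symm
  · exact ContinuousAt.div (by fun_prop) (by fun_prop) hz

lemma continuous_polar_symm : Continuous (⇑Complex.polarCoord.symm : ℝ × ℝ → ℂ) := by
  have hsymm : (⇑Complex.polarCoord.symm : ℝ × ℝ → ℂ)
      = fun p => ↑p.1 * (Real.cos p.2 + Real.sin p.2 * Complex.I) :=
    funext Complex.polarCoord_symm_apply
  rw [hsymm]; fun_prop

lemma integrable_polar {F : ℂ → ℝ} (hF : Continuous F) {c : ℝ} (hc : 0 ≤ c)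
    (h0 : ∀ z : ℂ, c ≤ ‖z‖ → F z = 0) :
    IntegrableOn (fun p : ℝ × ℝ => p.1 * F (Complex.polarCoord.symm p)) polarCoord.target := by
  have hG : Continuous fun p : ℝ × ℝ => p.1 * F (Complex.polarCoord.symm p) :=
    continuous_fst.mul (hF.comp continuous_polar_symm)
  set G : ℝ × ℝ → ℝ := fun p => p.1 * F (Complex.polarCoord.symm p) with hGdef
  set K : Set (ℝ × ℝ) := Icc 0 c ×ˢ Icc (-π) π with hKdef
  have hKc : IsCompact K := isCompact_Icc.prod isCompact_Icc
  have htm : MeasurableSet polarCoord.target := polarCoord.open_target.measurableSet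
  have h1 : IntegrableOn G (polarCoord.target ∩ K) :=
    (hG.continuousOn.integrableOn_compact hKc).mono_set inter_subset_right
  have h2 : IntegrableOn G (polarCoord.target \ K) := by
    have hEq : EqOn (fun _ => (0:ℝ)) G (polarCoord.target \ K) := by
      rintro ⟨r, θ⟩ ⟨hpt, hpk⟩
      rw [polarCoord_target] at hpt
      obtain ⟨hr, hθ⟩ := hpt
      simp only [mem_Ioi] at hr
      have hrc : c < r := by
        by_contra hcon
        exact hpk ⟨⟨le_of_lt hr, not_lt.1 hcon⟩, ⟨(hθ.1.le), hθ.2.le⟩⟩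
      have hnorm : ‖Complex.polarCoord.symm (r, θ)‖ = r := by
        rw [Complex.norm_polarCoord_symm]
        exact abs_of_pos hr
      have : F (Complex.polarCoord.symm (r, θ)) = 0 := by
        apply h0; rw [hnorm]; exact hrc.le
      simp only [G, this, mul_zero]
    exact integrableOn_zero.congr_fun hEq (htm.diff hKc.measurableSet)
  have h3 := h1.union h2
  rwa [inter_union_diff] at h3

theorem stmt_15 (u : EuclideanSpace ℝ (Fin 2) → ℝ)
    (hu : ContDiff ℝ (⊤ : ℕ∞) u) (hus : HasCompactSupport u)
    (hsupp : tsupport u ⊆ Metric.ball (0 : EuclideanSpace ℝ (Fin 2)) 1) :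
    ∫⁻ x in Metric.ball (0 : EuclideanSpace ℝ (Fin 2)) 1,
        ENNReal.ofReal ((u x) ^ 2 / (1 - ‖x‖) ^ 2) ≤
      ENNReal.ofReal (4 * ∫ x, ‖fderiv ℝ u x‖ ^ 2) := by
  rcases (tsupport u).eq_empty_or_nonempty with hK | hK
  · have hu0 : ∀ x, u x = 0 := fun x =>
      image_eq_zero_of_notMem_tsupport (by simp [hK])
    have : ∫⁻ x in Metric.ball (0 : EuclideanSpace ℝ (Fin 2)) 1,
        ENNReal.ofReal ((u x) ^ 2 / (1 - ‖x‖) ^ 2) = 0 := by simp [hu0]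
    rw [this]; exact zero_le
  obtain ⟨x₀, hx₀, hmax⟩ := hus.exists_isMaxOn hK continuous_norm.continuousOn
  set ρ := ‖x₀‖ with hρdef
  have hρ0 : 0 ≤ ρ := norm_nonneg _
  have hρ1 : ρ < 1 := by simpa [mem_ball_zero_iff] using hsupp hx₀
  set b := (ρ + 1) / 2 with hbdef
  have hb0 : 0 < b := by positivity
  have hb1 : b < 1 := by rw [hbdef]; linarith
  have hρb : ρ < b := by rw [hbdef]; linarith
  have hub : ∀ x : EuclideanSpace ℝ (Fin 2), b ≤ ‖x‖ → u x = 0 := by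
    intro x hx
    apply image_eq_zero_of_notMem_tsupport
    intro hmem
    have := hmax hmem
    simp only [← hρdef] at this
    exact absurd (le_trans hx this) (not_le.2 hρb)
  -- move to ℂ
  set e : ℂ ≃ₗᵢ[ℝ] EuclideanSpace ℝ (Fin 2) := Complex.orthonormalBasisOneI.repr with hedef
  set v : ℂ → ℝ := fun z => u (e z) with hvdef
  have hv : ContDiff ℝ (⊤ : ℕ∞) v := by
    apply hu.comp
    have : (⇑e : ℂ → EuclideanSpace ℝ (Fin 2)) = ⇑e.toContinuousLinearEquiv := rfl
    rw [this]
    exact e.toContinuousLinearEquiv.contDiff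
  have hvb : ∀ z : ℂ, b ≤ ‖z‖ → v z = 0 := fun z hz => hub _ (by rwa [e.norm_map])
  -- fderiv norms agree
  set L : ℂ →L[ℝ] EuclideanSpace ℝ (Fin 2) := e.toLinearIsometry.toContinuousLinearMap with hLdef
  have hLcoe : (⇑L : ℂ → EuclideanSpace ℝ (Fin 2)) = ⇑e := rfl
  have hfderiv_v : ∀ z : ℂ, fderiv ℝ v z = (fderiv ℝ u (e z)).comp L := by
    intro z
    have hL : HasFDerivAt (⇑e) L z := by rw [← hLcoe]; exact L.hasFDerivAt
    have hdu : HasFDerivAt u (fderiv ℝ u (e z)) (e z) :=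
      (hu.differentiable (by simp) (e z)).hasFDerivAt
    exact (hdu.comp z hL).fderiv
  have hnorm_fderiv : ∀ z : ℂ, ‖fderiv ℝ v z‖ = ‖fderiv ℝ u (e z)‖ := by
    intro z
    rw [hfderiv_v z]
    exact ContinuousLinearMap.opNorm_comp_linearIsometryEquiv (fderiv ℝ u (e z)) e
  -- fderiv v vanishes outside ball b
  have hfvb : ∀ z : ℂ, b ≤ ‖z‖ → ‖fderiv ℝ v z‖ ^ 2 = 0 := by
    intro z hz
    have htsupp : tsupport v ⊆ {w : ℂ | ‖w‖ ≤ ρ} := by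
      apply closure_minimal
      · intro w hw
        have hw' : e w ∈ tsupport u := subset_tsupport u hw
        have := hmax hw'
        simpa [e.norm_map] using this
      · exact isClosed_le continuous_norm continuous_const
    have hz' : z ∉ tsupport v := by
      intro hmem
      have h1 : ‖z‖ ≤ ρ := htsupp hmem
      linarith
    have : fderiv ℝ v z = 0 := by
      by_contra hcon
      exact hz' (support_fderiv_subset ℝ (Function.mem_support.2 hcon))
    simp [this]
  -- the two key functions on ℂ
  set F : ℂ → ℝ := fun z => v z ^ 2 / (1 - ‖z‖) ^ 2 with hFdef
  have hFc : Continuous F := cont_of_vanish hv.continuous hb1 hvb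
  have hFnn : ∀ z, 0 ≤ F z := fun z => div_nonneg (sq_nonneg _) (sq_nonneg _)
  have hF0 : ∀ z : ℂ, b ≤ ‖z‖ → F z = 0 := fun z hz => by
    simp only [hFdef]; rw [hvb z hz]; simp
  have hFint : Integrable F := by
    apply hFc.integrable_of_hasCompactSupport
    apply HasCompactSupport.intro (isCompact_closedBall (0:ℂ) b)
    intro z hz
    rw [mem_closedBall_zero_iff, not_le] at hz
    exact hF0 z hz.le
  set H : ℂ → ℝ := fun z => ‖fderiv ℝ v z‖ ^ 2 with hHdef
  have hHc : Continuous H := (hv.continuous_fderiv (by simp)).norm.pow 2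
  have hHnn : ∀ z, 0 ≤ H z := fun z => sq_nonneg _
  have hH0 : ∀ z : ℂ, b ≤ ‖z‖ → H z = 0 := hfvb
  have hHint : Integrable H := by
    apply hHc.integrable_of_hasCompactSupport
    apply HasCompactSupport.intro (isCompact_closedBall (0:ℂ) b)
    intro z hz
    rw [mem_closedBall_zero_iff, not_le] at hz
    exact hH0 z hz.le
  have htgt : MeasurableSet polarCoord.target := polarCoord.open_target.measurableSet
  have hep : MeasurePreserving ⇑e volume volume := e.measurePreserving
  have hsymmc : Continuous (⇑Complex.polarCoord.symm : ℝ × ℝ → ℂ) := by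
    have hsymm : (⇑Complex.polarCoord.symm : ℝ × ℝ → ℂ)
        = fun p => ↑p.1 * (Real.cos p.2 + Real.sin p.2 * Complex.I) :=
      funext Complex.polarCoord_symm_apply
    rw [hsymm]; fun_prop
  -- Fubini helper
  have fubini : ∀ f : ℝ × ℝ → ENNReal, Measurable f →
      ∫⁻ p in polarCoord.target, f p =
        ∫⁻ θ in Ioo (-π) π, ∫⁻ r in Ioi (0:ℝ), f (r, θ) := by
    intro f hf
    rw [polarCoord_target, Measure.volume_eq_prod, ← Measure.prod_restrict]
    exact MeasureTheory.lintegral_prod_symm f hf.aemeasurable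
  -- the per-angle Hardy inequality
  have key : ∀ θ : ℝ,
      (∫⁻ r in Ioi (0:ℝ), ENNReal.ofReal (r * F (Complex.polarCoord.symm (r, θ)))) ≤
        4 * ∫⁻ r in Ioi (0:ℝ), ENNReal.ofReal (r * H (Complex.polarCoord.symm (r, θ))) := by
    intro θ
    set c : ℂ := Real.cos θ + Real.sin θ * Complex.I with hcdef
    have hcnorm : ‖c‖ = 1 := by
      have hc2 : c = Complex.cos ↑θ + Complex.sin ↑θ * Complex.I := by
        rw [hcdef, Complex.ofReal_cos, Complex.ofReal_sin]
      rw [hc2]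
      exact Complex.norm_cos_add_sin_mul_I θ
    set g : ℝ → ℝ := fun r => v (r • c) with hgdef
    have hgC : ContDiff ℝ (⊤ : ℕ∞) g := hv.comp (contDiff_id.smul contDiff_const)
    have hnorm_smul : ∀ r : ℝ, 0 ≤ r → ‖r • c‖ = r := by
      intro r hr
      rw [norm_smul, hcnorm, mul_one, Real.norm_eq_abs, abs_of_nonneg hr]
    have hgb : ∀ r, b ≤ r → g r = 0 := fun r hr =>
      hvb _ (by rw [hnorm_smul r (le_trans hb0.le hr)]; exact hr)
    have hsymm_eq : ∀ r : ℝ, Complex.polarCoord.symm (r, θ) = r • c := by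
      intro r
      rw [Complex.polarCoord_symm_apply]
      simp [hcdef, Complex.real_smul]
      ring
    have hderiv : ∀ r : ℝ, deriv g r = fderiv ℝ v (r • c) c := by
      intro r
      have h1 : HasDerivAt (fun r : ℝ => r • c) c r := by
        simpa using (hasDerivAt_id r).smul_const c
      have h2 : HasFDerivAt v (fderiv ℝ v (r • c)) (r • c) :=
        (hv.differentiable (by simp) _).hasFDerivAt
      exact (h2.comp_hasDerivAt r h1).deriv
    have hmeasR : Measurable fun r : ℝ => ENNReal.ofReal (r * H (Complex.polarCoord.symm (r, θ))) := by
      apply Measurable.ennreal_ofReal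
      exact (continuous_id.mul (hHc.comp (hsymmc.comp (continuous_id.prodMk continuous_const)))).measurable
    calc (∫⁻ r in Ioi (0:ℝ), ENNReal.ofReal (r * F (Complex.polarCoord.symm (r, θ))))
        = ∫⁻ r in Ioi (0:ℝ), ENNReal.ofReal (r * (g r ^ 2 / (1 - r) ^ 2)) := by
          apply setLIntegral_congr_fun measurableSet_Ioi
          refine fun r hr => ?_
          beta_reduce
          rw [hsymm_eq r]
          congr 2
          simp only [hFdef, hgdef]
          rw [hnorm_smul r (le_of_lt hr)]
      _ ≤ 4 * ∫⁻ r in Ioi (0:ℝ), ENNReal.ofReal (r * (deriv g r) ^ 2) :=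
          hardy1d hgC hb0 hb1 hgb
      _ ≤ 4 * ∫⁻ r in Ioi (0:ℝ), ENNReal.ofReal (r * H (Complex.polarCoord.symm (r, θ))) := by
          apply mul_le_mul_right
          apply setLIntegral_mono hmeasR
          intro r hr
          apply ENNReal.ofReal_le_ofReal
          apply mul_le_mul_of_nonneg_left _ (le_of_lt hr)
          rw [hsymm_eq r, hderiv r]
          simp only [hHdef]
          rw [← sq_abs (fderiv ℝ v (r • c) c)]
          apply pow_le_pow_left₀ (abs_nonneg _)
          calc |fderiv ℝ v (r • c) c| = ‖fderiv ℝ v (r • c) c‖ := rfl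
            _ ≤ ‖fderiv ℝ v (r • c)‖ * ‖c‖ := ContinuousLinearMap.le_opNorm _ _
            _ = ‖fderiv ℝ v (r • c)‖ := by rw [hcnorm, mul_one]
  -- measurability of the polar integrands
  have hmF : Measurable fun p : ℝ × ℝ => ENNReal.ofReal (p.1 * F (Complex.polarCoord.symm p)) :=
    Measurable.ennreal_ofReal (continuous_fst.mul (hFc.comp hsymmc)).measurable
  have hmH : Measurable fun p : ℝ × ℝ => ENNReal.ofReal (p.1 * H (Complex.polarCoord.symm p)) :=
    Measurable.ennreal_ofReal (continuous_fst.mul (hHc.comp hsymmc)).measurable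
  have hnnF : 0 ≤ᵐ[volume.restrict polarCoord.target]
      fun p : ℝ × ℝ => p.1 * F (Complex.polarCoord.symm p) := by
    refine (ae_restrict_iff' htgt).2 (Filter.Eventually.of_forall fun p hp => ?_)
    rw [polarCoord_target] at hp
    exact mul_nonneg (le_of_lt hp.1) (hFnn _)
  have hnnH : 0 ≤ᵐ[volume.restrict polarCoord.target]
      fun p : ℝ × ℝ => p.1 * H (Complex.polarCoord.symm p) := by
    refine (ae_restrict_iff' htgt).2 (Filter.Eventually.of_forall fun p hp => ?_)
    rw [polarCoord_target] at hp
    exact mul_nonneg (le_of_lt hp.1) (hHnn _)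
  -- main chain
  calc ∫⁻ x in Metric.ball (0 : EuclideanSpace ℝ (Fin 2)) 1,
        ENNReal.ofReal ((u x) ^ 2 / (1 - ‖x‖) ^ 2)
      ≤ ∫⁻ x, ENNReal.ofReal ((u x) ^ 2 / (1 - ‖x‖) ^ 2) := setLIntegral_le_lintegral _ _
    _ = ∫⁻ z : ℂ, ENNReal.ofReal (F z) := by
        rw [← hep.lintegral_comp]
        · apply lintegral_congr
          intro z
          simp only [hFdef, hvdef]
          rw [e.norm_map]
        · apply Measurable.ennreal_ofReal
          exact ((hu.continuous.pow 2).measurable).div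
            (((continuous_const.sub continuous_norm).pow 2).measurable)
    _ = ENNReal.ofReal (∫ z : ℂ, F z) :=
        (ofReal_integral_eq_lintegral_ofReal hFint (Filter.Eventually.of_forall hFnn)).symm
    _ = ENNReal.ofReal (∫ p in polarCoord.target, p.1 • F (Complex.polarCoord.symm p)) := by
        rw [Complex.integral_comp_polarCoord_symm F]
    _ = ∫⁻ p in polarCoord.target, ENNReal.ofReal (p.1 * F (Complex.polarCoord.symm p)) := by
        simp_rw [smul_eq_mul]
        exact ofReal_integral_eq_lintegral_ofReal (integrable_polar hFc hb0.le hF0) hnnF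
    _ = ∫⁻ θ in Ioo (-π) π, ∫⁻ r in Ioi (0:ℝ),
          ENNReal.ofReal (r * F (Complex.polarCoord.symm (r, θ))) := fubini _ hmF
    _ ≤ ∫⁻ θ in Ioo (-π) π, 4 * ∫⁻ r in Ioi (0:ℝ),
          ENNReal.ofReal (r * H (Complex.polarCoord.symm (r, θ))) :=
        lintegral_mono fun θ => key θ
    _ = 4 * ∫⁻ θ in Ioo (-π) π, ∫⁻ r in Ioi (0:ℝ),
          ENNReal.ofReal (r * H (Complex.polarCoord.symm (r, θ))) :=
        lintegral_const_mul' 4 _ (by norm_num)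
    _ = 4 * ∫⁻ p in polarCoord.target, ENNReal.ofReal (p.1 * H (Complex.polarCoord.symm p)) := by
        rw [fubini _ hmH]
    _ = 4 * ENNReal.ofReal (∫ p in polarCoord.target, p.1 • H (Complex.polarCoord.symm p)) := by
        simp_rw [smul_eq_mul]
        rw [ofReal_integral_eq_lintegral_ofReal (integrable_polar hHc hb0.le hH0) hnnH]
    _ = 4 * ENNReal.ofReal (∫ z : ℂ, H z) := by
        rw [Complex.integral_comp_polarCoord_symm H]
    _ = ENNReal.ofReal (4 * ∫ x, ‖fderiv ℝ u x‖ ^ 2) := by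
        have h1 : ∫ z : ℂ, H z = ∫ x, ‖fderiv ℝ u x‖ ^ 2 := by
          have h2 : (fun z : ℂ => H z) = fun z : ℂ => ‖fderiv ℝ u (e z)‖ ^ 2 := by
            funext z; simp only [hHdef]; rw [hnorm_fderiv z]
          rw [h2]
          exact hep.integral_comp e.toHomeomorph.measurableEmbedding
            (fun y => ‖fderiv ℝ u y‖ ^ 2)
        rw [h1, ENNReal.ofReal_mul (by norm_num)]
        norm_num
end

section
/- Let F : (0,∞) × ℝ → ℝ be a nonnegative C¹ function with F(r,0) = 0 for all r. Suppose that (i) there exists G : ℝ → ℝ such that F(r,t) = G(t)/(1 − r²)² for all r ∈ (0,1), t ∈ ℝ, and (ii) there exists H : ℝ → ℝ such that F(r,t) = H(t/√(log(1/r))) for all r ∈ (0,1), t ∈ ℝ. Then F(r,t) = 0 for all r ∈ (0,1) and all t ∈ ℝ. In particular, no nontrivial functional of the form u ↦ ∫_𝔻 F(|x|,u(x)) dx is simultaneously Möbius shift-invariant and dilation-invariant. -/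
/-!
The dilation form forces `F (r ^ 4) (2 * t) = F r t`, while the Möbius form makes
`F r t * (1 - r ^ 2) ^ 2` independent of `r`. Together they give
`G (2 * t) = G t * ((1 + r ^ 2) * (1 + r ^ 4)) ^ 2` for every `r ∈ (0, 1)`; the factor on the
right is not constant in `r`, so `G t = 0`.
-/

open Real Set

theorem sqrt_log_one_div_rpow {r : ℝ} (hr : 0 < r) {s : ℝ} (hs : 0 ≤ s) :
    √(log (1 / r ^ s)) = √s * √(log (1 / r)) := by
  rw [one_div, one_div, log_inv, log_inv, log_rpow hr, ← mul_neg, sqrt_mul hs]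

theorem rpow_mem_Ioo_zero_one {r : ℝ} (hr : r ∈ Ioo (0 : ℝ) 1) {s : ℝ} (hs : 0 < s) :
    r ^ s ∈ Ioo (0 : ℝ) 1 :=
  ⟨rpow_pos_of_pos hr.1 s, rpow_lt_one hr.1.le hr.2 hs⟩

theorem apply_rpow_sqrt_mul_eq {F : ℝ → ℝ → ℝ} {H : ℝ → ℝ}
    (hH : ∀ r ∈ Ioo (0 : ℝ) 1, ∀ t : ℝ, F r t = H (t / √(log (1 / r))))
    {r : ℝ} (hr : r ∈ Ioo (0 : ℝ) 1) {s : ℝ} (hs : 0 < s) (t : ℝ) :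
    F (r ^ s) (√s * t) = F r t := by
  rw [hH _ (rpow_mem_Ioo_zero_one hr hs), hH r hr, sqrt_log_one_div_rpow hr.1 hs.le,
    mul_div_mul_left _ _ (sqrt_ne_zero'.2 hs)]

theorem apply_pow_four_two_mul_eq {F : ℝ → ℝ → ℝ} {H : ℝ → ℝ}
    (hH : ∀ r ∈ Ioo (0 : ℝ) 1, ∀ t : ℝ, F r t = H (t / √(log (1 / r))))
    {r : ℝ} (hr : r ∈ Ioo (0 : ℝ) 1) (t : ℝ) :
    F (r ^ 4) (2 * t) = F r t := by
  have h := apply_rpow_sqrt_mul_eq hH hr (s := 4) (by norm_num) t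
  rwa [show √(4 : ℝ) = 2 by rw [show (4 : ℝ) = 2 ^ 2 by norm_num, sqrt_sq zero_le_two],
    show r ^ (4 : ℝ) = r ^ 4 by exact_mod_cast rpow_natCast r 4] at h

theorem eq_mul_one_add_sq_mul_one_add_pow_four {F : ℝ → ℝ → ℝ} {G H : ℝ → ℝ}
    (hG : ∀ r ∈ Ioo (0 : ℝ) 1, ∀ t : ℝ, F r t = G t / (1 - r ^ 2) ^ 2)
    (hH : ∀ r ∈ Ioo (0 : ℝ) 1, ∀ t : ℝ, F r t = H (t / √(log (1 / r))))
    {r : ℝ} (hr : r ∈ Ioo (0 : ℝ) 1) (t : ℝ) :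
    G (2 * t) = G t * ((1 + r ^ 2) * (1 + r ^ 4)) ^ 2 := by
  have hr4 : r ^ 4 ∈ Ioo (0 : ℝ) 1 := by exact_mod_cast rpow_mem_Ioo_zero_one hr four_pos
  have h := apply_pow_four_two_mul_eq hH hr t
  have hr2 : 1 - r ^ 2 ≠ 0 := by nlinarith [hr.1, hr.2]
  have hr8 : 1 - (r ^ 4) ^ 2 ≠ 0 := by nlinarith [hr4.1, hr4.2]
  rw [hG _ hr4, hG r hr, div_eq_div_iff (pow_ne_zero 2 hr8) (pow_ne_zero 2 hr2)] at h
  -- `1 - r ^ 8 = (1 - r ^ 2) * (1 + r ^ 2) * (1 + r ^ 4)`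
  apply mul_right_cancel₀ (pow_ne_zero 2 hr2)
  linear_combination h

theorem stmt_18_general (F : ℝ → ℝ → ℝ)
    (hG : ∃ G : ℝ → ℝ, ∀ r ∈ Set.Ioo (0:ℝ) 1, ∀ t : ℝ,
      F r t = G t / (1 - r ^ 2) ^ 2)
    (hH : ∃ H : ℝ → ℝ, ∀ r ∈ Set.Ioo (0:ℝ) 1, ∀ t : ℝ,
      F r t = H (t / Real.sqrt (Real.log (1 / r)))) :
    ∀ r ∈ Set.Ioo (0:ℝ) 1, ∀ t : ℝ, F r t = 0 := by
  obtain ⟨G, hG⟩ := hG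
  obtain ⟨H, hH⟩ := hH
  have hG_zero (t : ℝ) : G t = 0 := by
    have h₂ := eq_mul_one_add_sq_mul_one_add_pow_four hG hH (r := 1 / 2) (by norm_num) t
    have h₃ := eq_mul_one_add_sq_mul_one_add_pow_four hG hH (r := 1 / 3) (by norm_num) t
    norm_num at h₂ h₃
    linarith
  intro r hr t
  rw [hG r hr t, hG_zero, zero_div]

theorem stmt_18 (F : ℝ → ℝ → ℝ)
    (hF1 : ContDiffOn ℝ 1 (fun p : ℝ × ℝ => F p.1 p.2) (Set.Ioi (0:ℝ) ×ˢ Set.univ))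
    (hFpos : ∀ r ∈ Set.Ioi (0:ℝ), ∀ t : ℝ, 0 ≤ F r t)
    (hF0 : ∀ r ∈ Set.Ioi (0:ℝ), F r 0 = 0)
    (hG : ∃ G : ℝ → ℝ, ∀ r ∈ Set.Ioo (0:ℝ) 1, ∀ t : ℝ,
      F r t = G t / (1 - r ^ 2) ^ 2)
    (hH : ∃ H : ℝ → ℝ, ∀ r ∈ Set.Ioo (0:ℝ) 1, ∀ t : ℝ,
      F r t = H (t / Real.sqrt (Real.log (1 / r)))) :
    ∀ r ∈ Set.Ioo (0:ℝ) 1, ∀ t : ℝ, F r t = 0 :=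
  stmt_18_general F hG hH
end

section
/- Let N > 2 be an integer, let 2* = 2N/(N−2), and let u, w : ℝ^N → ℝ be continuous functions with compact support contained in the open unit ball B = {x ∈ ℝ^N : |x| < 1}. Define w_k(x) = 2^{(N−2)k/2}·w(2^k x). Then ∫_{ℝ^N} |w_k|^{2*} dx = ∫_{ℝ^N} |w|^{2*} dx for every k, and ∫_{ℝ^N} |u + w_k|^{2*} dx → ∫_{ℝ^N} |u|^{2*} dx + ∫_{ℝ^N} |w|^{2*} dx as k → ∞. -/
/-!
Under the critical scaling `w_t(x) = t^a w(t x)` with `a p = N` every `w_t` has the same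
`L^p` norm, while its support shrinks to a ball of radius `O(1/t)`. The error
`|u + w_t|^p - |w_t|^p - |u|^p` vanishes off that ball and, by the mean value theorem and the
boundedness of `u`, is at most `C (1 + |w_t|^(p-1))` on it. Both the volume of the ball and
`∫ |w_t|^(p-1) = t^(-a) ∫ |w|^(p-1)` tend to zero, so the `L^p` norms split in the limit.
-/

open Real MeasureTheory Set Filter Topology Metric Module

lemma Real.abs_rpow_sub_rpow_le {p R x y : ℝ} (hp : 1 ≤ p) (hx : x ∈ Icc 0 R)
    (hy : y ∈ Icc 0 R) : |x ^ p - y ^ p| ≤ p * R ^ (p - 1) * |x - y| := by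
  have hderiv : ∀ t ∈ Icc 0 R,
      HasDerivWithinAt (fun s : ℝ => s ^ p) (p * t ^ (p - 1)) (Icc 0 R) t :=
    fun t _ => (hasDerivAt_rpow_const (Or.inr hp)).hasDerivWithinAt
  have hbound : ∀ t ∈ Icc 0 R, ‖p * t ^ (p - 1)‖ ≤ p * R ^ (p - 1) := fun t ht => by
    obtain ⟨ht0, htR⟩ := ht
    rw [Real.norm_eq_abs, abs_of_nonneg (by positivity)]
    gcongr
  simpa only [Real.norm_eq_abs] using
    (convex_Icc 0 R).norm_image_sub_le_of_norm_hasDerivWithin_le hderiv hbound hy hx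

lemma Real.add_rpow_le_two_rpow_mul_add {q x y : ℝ} (hq : 0 ≤ q) (hx : 0 ≤ x) (hy : 0 ≤ y) :
    (x + y) ^ q ≤ 2 ^ q * (x ^ q + y ^ q) := by
  calc (x + y) ^ q ≤ (2 * max x y) ^ q := by
        gcongr
        linarith [le_max_left x y, le_max_right x y]
    _ = 2 ^ q * max x y ^ q := mul_rpow zero_le_two (le_max_of_le_left hx)
    _ ≤ 2 ^ q * (x ^ q + y ^ q) := by
        gcongr
        rcases max_cases x y with ⟨h, -⟩ | ⟨h, -⟩ <;> rw [h]
        · linarith [rpow_nonneg hy q]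
        · linarith [rpow_nonneg hx q]

lemma abs_abs_add_rpow_sub_abs_rpow_le {p : ℝ} (hp : 1 ≤ p) (a s : ℝ) :
    |(|a + s| ^ p - |s| ^ p)| ≤ p * (|a| + |s|) ^ (p - 1) * |a| := by
  calc |(|a + s| ^ p - |s| ^ p)| ≤ p * (|a| + |s|) ^ (p - 1) * |(|a + s| - |s|)| :=
        Real.abs_rpow_sub_rpow_le hp ⟨abs_nonneg _, abs_add_le a s⟩
          ⟨abs_nonneg _, le_add_of_nonneg_left (abs_nonneg a)⟩
    _ ≤ p * (|a| + |s|) ^ (p - 1) * |a| := by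
        refine mul_le_mul_of_nonneg_left ?_ (by positivity)
        simpa using abs_abs_sub_abs_le_abs_sub (a + s) s

lemma abs_abs_add_rpow_sub_sub_le {p M a : ℝ} (hp : 1 ≤ p) (ha : |a| ≤ M) (s : ℝ) :
    |(|a + s| ^ p - |s| ^ p - |a| ^ p)|
      ≤ (p * 2 ^ (p - 1) + 1) * M ^ p + p * 2 ^ (p - 1) * M * |s| ^ (p - 1) := by
  have hM : 0 ≤ M := (abs_nonneg a).trans ha
  have hMp : M ^ (p - 1) * M = M ^ p := by
    rw [← rpow_add_one' hM (by linarith), sub_add_cancel]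
  calc |(|a + s| ^ p - |s| ^ p - |a| ^ p)|
      ≤ |(|a + s| ^ p - |s| ^ p)| + |a| ^ p := by
        simpa only [abs_of_nonneg (rpow_nonneg (abs_nonneg a) p)] using
          abs_sub (|a + s| ^ p - |s| ^ p) (|a| ^ p)
    _ ≤ p * (M + |s|) ^ (p - 1) * M + M ^ p := by
        grw [abs_abs_add_rpow_sub_abs_rpow_le hp a s]
        have : 0 ≤ p - 1 := by linarith
        gcongr
    _ ≤ p * (2 ^ (p - 1) * (M ^ (p - 1) + |s| ^ (p - 1))) * M + M ^ p := by
        gcongr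
        exact Real.add_rpow_le_two_rpow_mul_add (by linarith) hM (abs_nonneg s)
    _ = (p * 2 ^ (p - 1) + 1) * M ^ p + p * 2 ^ (p - 1) * M * |s| ^ (p - 1) := by
        rw [← hMp]
        ring

theorem tendsto_integral_abs_add_rpow_sub_abs_rpow {ι α : Type*} {l : Filter ι}
    [MeasurableSpace α] {μ : Measure α} {p M : ℝ} (hp : 1 ≤ p) {u : α → ℝ} {v : ι → α → ℝ}
    {S : ι → Set α} (hu : ∀ x, |u x| ≤ M) (hup : Integrable (fun x => |u x| ^ p) μ)
    (hS : ∀ᶠ i in l, MeasurableSet (S i) ∧ μ (S i) ≠ ⊤ ∧ Function.support (v i) ⊆ S i)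
    (hv : ∀ᶠ i in l, Integrable (fun x => |u x + v i x| ^ p - |v i x| ^ p) μ ∧
      Integrable (fun x => |v i x| ^ (p - 1)) μ)
    (hSμ : Tendsto (fun i => μ.real (S i)) l (𝓝 0))
    (hvμ : Tendsto (fun i => ∫ x, |v i x| ^ (p - 1) ∂μ) l (𝓝 0)) :
    Tendsto (fun i => ∫ x, |u x + v i x| ^ p - |v i x| ^ p ∂μ) l (𝓝 (∫ x, |u x| ^ p ∂μ)) := by
  set c := p * 2 ^ (p - 1)
  set K := (c + 1) * M ^ p
  have hbound : ∀ᶠ i in l, ‖(∫ x, |u x + v i x| ^ p - |v i x| ^ p ∂μ) - ∫ x, |u x| ^ p ∂μ‖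
      ≤ K * μ.real (S i) + c * M * ∫ x, |v i x| ^ (p - 1) ∂μ := by
    filter_upwards [hS, hv] with i ⟨hSm, hSfin, hvS⟩ ⟨hg, hvq⟩
    have hpointwise : ∀ x, |(|u x + v i x| ^ p - |v i x| ^ p - |u x| ^ p)|
        ≤ (S i).indicator (fun _ => K) x + c * M * |v i x| ^ (p - 1) := by
      intro x
      by_cases hx : x ∈ S i
      · rw [indicator_of_mem hx]
        exact abs_abs_add_rpow_sub_sub_le hp (hu x) (v i x)
      · have hM : 0 ≤ M := (abs_nonneg _).trans (hu x)
        rw [indicator_of_notMem hx, Function.notMem_support.1 (mt (@hvS x) hx), abs_zero,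
          add_zero, zero_rpow (by linarith), sub_zero, sub_self, abs_zero, zero_add]
        positivity
    have hind : Integrable ((S i).indicator fun _ => K) μ :=
      (integrable_indicator_iff hSm).2 (integrableOn_const hSfin)
    calc ‖(∫ x, |u x + v i x| ^ p - |v i x| ^ p ∂μ) - ∫ x, |u x| ^ p ∂μ‖
        = ‖∫ x, |u x + v i x| ^ p - |v i x| ^ p - |u x| ^ p ∂μ‖ := by rw [integral_sub hg hup]
      _ ≤ ∫ x, (S i).indicator (fun _ => K) x + c * M * |v i x| ^ (p - 1) ∂μ :=
        norm_integral_le_of_norm_le (hind.add (hvq.const_mul _)) (.of_forall hpointwise)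
      _ = K * μ.real (S i) + c * M * ∫ x, |v i x| ^ (p - 1) ∂μ := by
        rw [integral_add hind (hvq.const_mul _), integral_indicator_const K hSm,
          integral_const_mul, smul_eq_mul, mul_comm]
  have hlim : Tendsto (fun i => K * μ.real (S i) + c * M * ∫ x, |v i x| ^ (p - 1) ∂μ) l
      (𝓝 0) := by
    simpa using (hSμ.const_mul K).add (hvμ.const_mul (c * M))
  exact tendsto_iff_norm_sub_tendsto_zero.2
    (squeeze_zero' (.of_forall fun _ => norm_nonneg _) hbound hlim)

lemma HasCompactSupport.integrable_abs_rpow {α : Type*} [TopologicalSpace α]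
    [MeasurableSpace α] [OpensMeasurableSpace α] {μ : Measure α} [IsFiniteMeasureOnCompacts μ]
    {f : α → ℝ} (hfs : HasCompactSupport f) (hf : Continuous f) {q : ℝ} (hq : 0 < q) :
    Integrable (fun x => |f x| ^ q) μ :=
  (hf.abs.rpow_const fun _ => Or.inr hq.le).integrable_of_hasCompactSupport
    (hfs.comp_left (g := fun t => |t| ^ q) (by simp [zero_rpow hq.ne']))

section Dilation

variable {E : Type*} [NormedAddCommGroup E] [NormedSpace ℝ E]

lemma support_mul_comp_smul_subset_closedBall {f : E → ℝ} {R t : ℝ} (ht : 0 < t)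
    (hf : Function.support f ⊆ closedBall 0 R) (c : ℝ) :
    Function.support (fun x => c * f (t • x)) ⊆ closedBall 0 (R / t) := by
  intro x hx
  have := hf (right_ne_zero_of_mul hx)
  rw [mem_closedBall_zero_iff, norm_smul, Real.norm_of_nonneg ht.le] at this
  rw [mem_closedBall_zero_iff, le_div_iff₀ ht, mul_comm]
  exact this

variable [FiniteDimensional ℝ E] [MeasurableSpace E] [BorelSpace E]
  (μ : Measure E) [μ.IsAddHaarMeasure]

lemma tendsto_addHaar_real_closedBall_div_atTop (hE : finrank ℝ E ≠ 0) {R : ℝ} (hR : 0 ≤ R) :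
    Tendsto (fun t => μ.real (closedBall (0 : E) (R / t))) atTop (𝓝 0) := by
  have : Tendsto (fun t => (R / t) ^ finrank ℝ E * μ.real (ball (0 : E) 1)) atTop (𝓝 0) := by
    simpa [zero_pow hE] using
      ((tendsto_const_nhds.div_atTop tendsto_id).pow (finrank ℝ E)).mul_const
        (μ.real (ball (0 : E) 1))
  refine this.congr' ?_
  filter_upwards [eventually_gt_atTop 0] with t ht
  rw [Measure.addHaar_real_closedBall μ 0 (by positivity)]

lemma integral_abs_rpow_mul_comp_smul (f : E → ℝ) {t : ℝ} (ht : 0 < t) (a q : ℝ) :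
    ∫ x, |t ^ a * f (t • x)| ^ q ∂μ = t ^ (a * q - finrank ℝ E) * ∫ x, |f x| ^ q ∂μ := by
  simp_rw [abs_mul, abs_of_pos (rpow_pos_of_pos ht a),
    mul_rpow (rpow_pos_of_pos ht a).le (abs_nonneg _), ← rpow_mul ht.le]
  rw [integral_const_mul,
    Measure.integral_comp_smul_of_nonneg μ (fun y => |f y| ^ q) t (hR := ht.le), smul_eq_mul,
    rpow_sub ht, rpow_natCast, div_eq_mul_inv, mul_assoc]

lemma integral_abs_rpow_mul_comp_smul_of_mul_eq_finrank (f : E → ℝ) {t : ℝ} (ht : 0 < t)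
    {a p : ℝ} (hap : a * p = finrank ℝ E) :
    ∫ x, |t ^ a * f (t • x)| ^ p ∂μ = ∫ x, |f x| ^ p ∂μ := by
  rw [integral_abs_rpow_mul_comp_smul μ f ht, hap, sub_self, rpow_zero, one_mul]

lemma tendsto_integral_abs_rpow_mul_comp_smul_atTop (f : E → ℝ) {a q : ℝ}
    (haq : a * q < finrank ℝ E) :
    Tendsto (fun t => ∫ x, |t ^ a * f (t • x)| ^ q ∂μ) atTop (𝓝 0) := by
  have : Tendsto (fun t : ℝ => t ^ (a * q - finrank ℝ E) * ∫ x, |f x| ^ q ∂μ) atTop (𝓝 0) := by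
    simpa using (tendsto_rpow_neg_atTop (sub_pos.2 haq)).mul_const (∫ x, |f x| ^ q ∂μ)
  refine this.congr' ?_
  filter_upwards [eventually_gt_atTop 0] with t ht
  rw [integral_abs_rpow_mul_comp_smul μ f ht]

theorem tendsto_integral_abs_add_dilation_rpow {p a : ℝ} (hp : 1 < p) (ha : 0 < a)
    (hap : a * p = finrank ℝ E) {u w : E → ℝ} (hu : Continuous u) (hus : HasCompactSupport u)
    (hw : Continuous w) (hws : HasCompactSupport w) :
    Tendsto (fun t : ℝ => ∫ x, |u x + t ^ a * w (t • x)| ^ p ∂μ) atTop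
      (𝓝 (∫ x, |u x| ^ p ∂μ + ∫ x, |w x| ^ p ∂μ)) := by
  set v : ℝ → E → ℝ := fun t x => t ^ a * w (t • x)
  have hp0 : 0 < p := by linarith
  have hE : finrank ℝ E ≠ 0 := by
    have : (0 : ℝ) < finrank ℝ E := hap ▸ mul_pos ha hp0
    exact_mod_cast this.ne'
  have hvs : ∀ t ≠ 0, HasCompactSupport (v t) := fun t ht => (hws.comp_smul ht).mul_left
  have hvc : ∀ t, Continuous (v t) := fun t =>
    continuous_const.mul (hw.comp (continuous_const_smul t))
  have hvint : ∀ t > 0, ∀ q : ℝ, 0 < q → Integrable (fun x => |v t x| ^ q) μ := fun t ht q hq =>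
    (hvs t ht.ne').integrable_abs_rpow (hvc t) hq
  have hdiffint : ∀ t > 0, Integrable (fun x => |u x + v t x| ^ p - |v t x| ^ p) μ :=
    fun t ht => ((hus.add (hvs t ht.ne')).integrable_abs_rpow (hu.add (hvc t)) hp0).sub
      (hvint t ht p hp0)
  obtain ⟨M, hM⟩ := hu.bounded_above_of_compact_support hus
  obtain ⟨R, hR, hwR⟩ := hws.isCompact.isBounded.subset_closedBall_lt 0 (0 : E)
  have hlim := tendsto_integral_abs_add_rpow_sub_abs_rpow (μ := μ) (v := v)
    (S := fun t => closedBall 0 (R / t)) hp.le hM (hus.integrable_abs_rpow hu hp0)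
    ?hS ?hv (tendsto_addHaar_real_closedBall_div_atTop μ hE hR.le)
    (tendsto_integral_abs_rpow_mul_comp_smul_atTop μ w (by rw [mul_sub, hap]; linarith))
  case hS =>
    filter_upwards [eventually_gt_atTop 0] with t ht
    exact ⟨measurableSet_closedBall, measure_closedBall_lt_top.ne,
      support_mul_comp_smul_subset_closedBall ht ((subset_tsupport w).trans hwR) _⟩
  case hv =>
    filter_upwards [eventually_gt_atTop 0] with t ht
    exact ⟨hdiffint t ht, hvint t ht _ (by linarith)⟩
  refine (hlim.add_const _).congr' ?_
  filter_upwards [eventually_gt_atTop 0] with t ht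
  rw [← integral_abs_rpow_mul_comp_smul_of_mul_eq_finrank μ w ht hap,
    ← integral_add (hdiffint t ht) (hvint t ht p hp0)]
  simp only [v, sub_add_cancel]

end Dilation

theorem stmt_19_general (N : ℕ) (hN : 2 < N) (p : ℝ) (hp : p = 2 * N / (N - 2))
    (u w : EuclideanSpace ℝ (Fin N) → ℝ)
    (hu : Continuous u) (hw : Continuous w)
    (hus : HasCompactSupport u) (hws : HasCompactSupport w)
    (wk : ℕ → EuclideanSpace ℝ (Fin N) → ℝ)
    (hwk : ∀ k : ℕ, ∀ x : EuclideanSpace ℝ (Fin N),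
      wk k x = 2 ^ (((N : ℝ) - 2) * k / 2) * w ((2 ^ k : ℝ) • x)) :
    (∀ k : ℕ, ∫ x, |wk k x| ^ p = ∫ x, |w x| ^ p) ∧
    Tendsto (fun k : ℕ => ∫ x, |u x + wk k x| ^ p) atTop
      (𝓝 ((∫ x, |u x| ^ p) + ∫ x, |w x| ^ p)) := by
  have hN2 : (0 : ℝ) < N - 2 := by
    have : (2 : ℝ) < N := by exact_mod_cast hN
    linarith
  have hap : (N - 2) / 2 * p = finrank ℝ (EuclideanSpace ℝ (Fin N)) := by
    rw [finrank_euclideanSpace_fin, hp]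
    field_simp
  have hp1 : 1 < p := by
    rw [hp, lt_div_iff₀ hN2]
    linarith
  have hwk' : ∀ k, wk k = fun x => ((2 : ℝ) ^ k) ^ (((N : ℝ) - 2) / 2) * w ((2 ^ k : ℝ) • x) := by
    intro k
    ext x
    rw [hwk, ← rpow_natCast, ← rpow_mul zero_le_two]
    ring_nf
  refine ⟨fun k => ?_, ?_⟩
  · rw [hwk' k, integral_abs_rpow_mul_comp_smul_of_mul_eq_finrank volume w (by positivity) hap]
  · simp_rw [hwk']
    exact (tendsto_integral_abs_add_dilation_rpow volume hp1 (by positivity) hap hu hus hw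
      hws).comp (tendsto_pow_atTop_atTop_of_one_lt one_lt_two)

theorem stmt_19 (N : ℕ) (hN : 2 < N) (p : ℝ) (hp : p = 2 * N / (N - 2))
    (u w : EuclideanSpace ℝ (Fin N) → ℝ)
    (hu : Continuous u) (hw : Continuous w)
    (hus : HasCompactSupport u) (hws : HasCompactSupport w)
    (husupp : tsupport u ⊆ Metric.ball (0 : EuclideanSpace ℝ (Fin N)) 1)
    (hwsupp : tsupport w ⊆ Metric.ball (0 : EuclideanSpace ℝ (Fin N)) 1)
    (wk : ℕ → EuclideanSpace ℝ (Fin N) → ℝ)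
    (hwk : ∀ k : ℕ, ∀ x : EuclideanSpace ℝ (Fin N),
      wk k x = 2 ^ (((N : ℝ) - 2) * k / 2) * w ((2 ^ k : ℝ) • x)) :
    (∀ k : ℕ, ∫ x, |wk k x| ^ p = ∫ x, |w x| ^ p) ∧
    Tendsto (fun k : ℕ => ∫ x, |u x + wk k x| ^ p) atTop
      (𝓝 ((∫ x, |u x| ^ p) + ∫ x, |w x| ^ p)) :=
  stmt_19_general N hN p hp u w hu hw hus hws wk hwk
end
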